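/- arXiv:1609.03081 — 4 statements merged into one kernel-verified Lean document; each statement's English description precedes it below -/
import Mathlib

section
/- For every bilinear form T : ℓ_4^n × ℓ_4^n → ℝ, (∑_{i,j=1}^n |T(e_i,e_j)|^2)^{1/2} ≤ √2 · ‖T‖. -/
/-!
Write `b i j = T(e_i, e_j)²` and `P = ∑ i, ∑ j, b i j`. Averaging `T(·, ∑ j, ±w_j e_j)` over all
sign patterns, the Khintchine inequality for the exponent `4/3` (constant `3^{1/3}`, obtained from
the fourth moment by Hölder) and the duality `ℓ_4^* = ℓ_{4/3}` give the mixed-norm bound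
`∑ i, (∑ j, b i j * v j)^{2/3} ≤ (3 ‖T‖⁴ ∑ j, v j²)^{1/3}` for every `v ≥ 0`, and likewise for the
transpose. Testing these bounds on the square roots of the column and row sums of `b` and combining
them by Cauchy–Schwarz and Hölder yields `P² ≤ 3 ‖T‖⁴`, so `P^{1/2} ≤ 3^{1/4} ‖T‖ ≤ √2 ‖T‖`.
-/

open Finset
open scoped ENNReal

namespace HardyLittlewood

section Khintchine

def boolSign (b : Bool) : ℝ := if b then 1 else -1

lemma boolSign_sq (b : Bool) : boolSign b ^ 2 = 1 := by
  cases b <;> norm_num [boolSign]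

lemma boolSign_not (b : Bool) : boolSign (!b) = -boolSign b := by
  cases b <;> norm_num [boolSign]

lemma pow_four_sum_sq_le {α : Type*} (s : Finset α) (f : α → ℝ) :
    (∑ x ∈ s, f x ^ 2) ^ 4 ≤ (∑ x ∈ s, |f x| ^ (4 / 3 : ℝ)) ^ 3 * ∑ x ∈ s, f x ^ 4 := by
  have hpq : (4 / 3 : ℝ).HolderConjugate 4 := by
    rw [Real.holderConjugate_iff]; norm_num
  have h := Real.inner_le_Lp_mul_Lq_of_nonneg s hpq (f := fun x => |f x|) (g := fun x => |f x|)
    (fun _ _ => abs_nonneg _) (fun _ _ => abs_nonneg _)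
  simp only [← sq, sq_abs, Real.rpow_ofNat, Even.pow_abs (by decide : Even 4)] at h
  calc (∑ x ∈ s, f x ^ 2) ^ 4
      ≤ ((∑ x ∈ s, |f x| ^ (4 / 3 : ℝ)) ^ (3 / 4 : ℝ) * (∑ x ∈ s, f x ^ 4) ^ (1 / 4 : ℝ)) ^ 4 := by
        refine pow_le_pow_left₀ (sum_nonneg fun x _ => sq_nonneg _) (h.trans_eq ?_) 4
        norm_num
    _ = (∑ x ∈ s, |f x| ^ (4 / 3 : ℝ)) ^ 3 * ∑ x ∈ s, f x ^ 4 := by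
        rw [mul_pow, ← Real.rpow_mul_natCast (sum_nonneg fun x _ => by positivity),
          ← Real.rpow_mul_natCast (sum_nonneg fun x _ => by positivity)]
        norm_num

variable {ι : Type*} [Fintype ι] [DecidableEq ι]

lemma sum_boolSign_mul_eq_zero {a : ι} {f : (ι → Bool) → ℝ}
    (hf : ∀ ε, f (Function.update ε a (!ε a)) = f ε) :
    ∑ ε : ι → Bool, boolSign (ε a) * f ε = 0 := by
  have hflip : Function.Involutive fun ε : ι → Bool => Function.update ε a (!ε a) := by
    intro ε; simp
  have := (Equiv.sum_comp (hflip.toPerm _) fun ε => boolSign (ε a) * f ε).symm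
  simp only [Function.Involutive.coe_toPerm, Function.update_self, boolSign_not, hf,
    neg_mul, sum_neg_distrib] at this
  linarith

lemma sum_boolSign_mul_eq_zero_of_notMem {a : ι} {s : Finset ι} (ha : a ∉ s) (c : ι → ℝ)
    (g : ℝ → ℝ) :
    ∑ ε : ι → Bool, boolSign (ε a) * g (∑ j ∈ s, boolSign (ε j) * c j) = 0 := by
  refine sum_boolSign_mul_eq_zero fun ε => congrArg g (sum_congr rfl fun j hj => ?_)
  rw [Function.update_of_ne (ne_of_mem_of_not_mem hj ha)]

lemma sum_sum_boolSign_mul_sq (s : Finset ι) (c : ι → ℝ) :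
    ∑ ε : ι → Bool, (∑ j ∈ s, boolSign (ε j) * c j) ^ 2
      = 2 ^ Fintype.card ι * ∑ j ∈ s, c j ^ 2 := by
  induction s using Finset.induction_on with
  | empty => simp
  | insert a s ha ih =>
    have hodd := sum_boolSign_mul_eq_zero_of_notMem ha c (2 * c a * ·)
    have expand : ∀ ε : ι → Bool, (∑ j ∈ insert a s, boolSign (ε j) * c j) ^ 2
        = c a ^ 2 + (∑ j ∈ s, boolSign (ε j) * c j) ^ 2
          + boolSign (ε a) * (2 * c a * ∑ j ∈ s, boolSign (ε j) * c j) := by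
      intro ε
      rw [sum_insert ha]
      linear_combination c a ^ 2 * boolSign_sq (ε a)
    rw [sum_congr rfl fun ε _ => expand ε]
    simp only [sum_add_distrib, hodd, ih, sum_insert ha, sum_const,
      card_univ, Fintype.card_fun, Fintype.card_bool, nsmul_eq_mul]
    push_cast
    ring

lemma sum_sum_boolSign_mul_pow_four_le (s : Finset ι) (c : ι → ℝ) :
    ∑ ε : ι → Bool, (∑ j ∈ s, boolSign (ε j) * c j) ^ 4
      ≤ 3 * 2 ^ Fintype.card ι * (∑ j ∈ s, c j ^ 2) ^ 2 := by
  induction s using Finset.induction_on with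
  | empty => simp
  | insert a s ha ih =>
    have hodd := sum_boolSign_mul_eq_zero_of_notMem ha c
      (fun t => 4 * c a ^ 3 * t + 4 * c a * t ^ 3)
    have expand : ∀ ε : ι → Bool, (∑ j ∈ insert a s, boolSign (ε j) * c j) ^ 4
        = c a ^ 4 + 6 * c a ^ 2 * (∑ j ∈ s, boolSign (ε j) * c j) ^ 2
          + (∑ j ∈ s, boolSign (ε j) * c j) ^ 4
          + boolSign (ε a) * (4 * c a ^ 3 * (∑ j ∈ s, boolSign (ε j) * c j)
            + 4 * c a * (∑ j ∈ s, boolSign (ε j) * c j) ^ 3) := by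
      intro ε
      rw [sum_insert ha]
      have h := boolSign_sq (ε a)
      linear_combination (c a ^ 4 * (boolSign (ε a) ^ 2 + 1)
        + 6 * c a ^ 2 * (∑ j ∈ s, boolSign (ε j) * c j) ^ 2
        + 4 * c a ^ 3 * boolSign (ε a) * (∑ j ∈ s, boolSign (ε j) * c j)) * h
    rw [sum_congr rfl fun ε _ => expand ε]
    simp only [sum_add_distrib, hodd, ← mul_sum,
      sum_sum_boolSign_mul_sq, sum_insert ha, sum_const,
      card_univ, Fintype.card_fun, Fintype.card_bool, nsmul_eq_mul]
    push_cast
    have hσ : 0 ≤ ∑ j ∈ s, c j ^ 2 := sum_nonneg fun j _ => sq_nonneg _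
    have hN : (0 : ℝ) < 2 ^ Fintype.card ι := by positivity
    nlinarith [mul_nonneg hN.le (pow_nonneg (sq_nonneg (c a)) 2),
      mul_nonneg (mul_nonneg hN.le (sq_nonneg (c a))) hσ]

theorem khintchine_four_thirds (c : ι → ℝ) :
    2 ^ Fintype.card ι * (∑ j, c j ^ 2) ^ (2 / 3 : ℝ)
      ≤ 3 ^ (1 / 3 : ℝ) * ∑ ε : ι → Bool, |∑ j, boolSign (ε j) * c j| ^ (4 / 3 : ℝ) := by
  set N : ℝ := 2 ^ Fintype.card ι
  set σ := ∑ j, c j ^ 2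
  set Q := ∑ ε : ι → Bool, |∑ j, boolSign (ε j) * c j| ^ (4 / 3 : ℝ)
  have hσ : 0 ≤ σ := sum_nonneg fun j _ => sq_nonneg _
  have hQ : 0 ≤ Q := sum_nonneg fun ε _ => by positivity
  have fourth : (N * σ) ^ 4 ≤ Q ^ 3 * (3 * N * σ ^ 2) := by
    calc (N * σ) ^ 4 ≤ Q ^ 3 * ∑ ε : ι → Bool, (∑ j, boolSign (ε j) * c j) ^ 4 := by
          rw [← sum_sum_boolSign_mul_sq]
          exact pow_four_sum_sq_le univ _
      _ ≤ Q ^ 3 * (3 * N * σ ^ 2) := by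
          gcongr
          exact sum_sum_boolSign_mul_pow_four_le univ c
  rcases hσ.eq_or_lt with hσ0 | hσ0
  · rw [← hσ0, Real.zero_rpow (by norm_num), mul_zero]
    positivity
  have cubed : N ^ 3 * σ ^ 2 ≤ 3 * Q ^ 3 := by
    refine le_of_mul_le_mul_right ?_ (by positivity : 0 < N * σ ^ 2)
    linear_combination fourth
  rw [← pow_le_pow_iff_left₀ (by positivity) (by positivity) three_ne_zero]
  calc (N * σ ^ (2 / 3 : ℝ)) ^ 3 = N ^ 3 * σ ^ 2 := by
        rw [mul_pow, ← Real.rpow_mul_natCast hσ]; norm_num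
    _ ≤ 3 * Q ^ 3 := cubed
    _ = (3 ^ (1 / 3 : ℝ) * Q) ^ 3 := by
        rw [mul_pow, ← Real.rpow_mul_natCast (by norm_num)]; norm_num

end Khintchine

section Duality

variable {ι : Type*} [Fintype ι]

lemma norm_toLp_four (x : ι → ℝ) : ‖WithLp.toLp 4 x‖ = (∑ i, x i ^ 4) ^ (1 / 4 : ℝ) := by
  rw [PiLp.norm_eq_sum (by norm_num)]
  norm_num [Real.norm_eq_abs, Even.pow_abs (by decide : Even 4)]

variable [DecidableEq ι]

lemma apply_eq_sum_mul_apply_single {p : ℝ≥0∞} {F : Type*} [FunLike F (PiLp p fun _ : ι => ℝ) ℝ]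
    [LinearMapClass F ℝ (PiLp p fun _ : ι => ℝ) ℝ] (f : F) (x : PiLp p (fun _ : ι => ℝ)) :
    f x = ∑ i, x i * f (PiLp.single p i 1) := by
  conv_lhs => rw [← (PiLp.basisFun p ℝ ι).sum_repr x]
  simp [PiLp.basisFun_apply]

theorem sum_abs_apply_single_rpow_le {p : ℝ≥0∞} [Fact (1 ≤ p)] {q : ℝ}
    (hpq : p.toReal.HolderConjugate q) (f : PiLp p (fun _ : ι => ℝ) →L[ℝ] ℝ) :
    ∑ i, |f (PiLp.single p i 1)| ^ q ≤ ‖f‖ ^ q := by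
  set L := fun i => f (PiLp.single p i 1)
  set W := ∑ i, |L i| ^ q
  have hq : 1 < q := hpq.symm.lt
  have hW : 0 ≤ W := sum_nonneg fun i _ => by positivity
  -- the extremal vector `x i = sign (L i) |L i| ^ (q - 1)` of Hölder's inequality
  set x : PiLp p (fun _ : ι => ℝ) := WithLp.toLp p fun i => L i * |L i| ^ (q - 2)
  have hx : ∀ i, |x i| = |L i| ^ (q - 1) := by
    intro i
    rw [PiLp.toLp_apply, abs_mul, abs_of_nonneg (Real.rpow_nonneg (abs_nonneg (L i)) _),
      ← Real.rpow_one_add' (abs_nonneg _) (by linarith)]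
    ring_nf
  have hfx : f x = W := by
    rw [apply_eq_sum_mul_apply_single f x]
    refine sum_congr rfl fun i _ => ?_
    calc (L i * |L i| ^ (q - 2)) * L i = |L i| ^ (2 : ℝ) * |L i| ^ (q - 2) := by
          rw [Real.rpow_two, sq_abs]; ring
      _ = |L i| ^ q := by
          rw [← Real.rpow_add' (abs_nonneg _) (by linarith)]; ring_nf
  have hnorm : ‖x‖ = W ^ (1 / p.toReal) := by
    rw [PiLp.norm_eq_sum hpq.pos]
    congr 1
    refine sum_congr rfl fun i _ => ?_
    rw [Real.norm_eq_abs, hx, ← Real.rpow_mul (abs_nonneg _), hpq.symm.sub_one_mul_conj]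
  have hfW : W ≤ ‖f‖ * W ^ (1 / p.toReal) := by
    calc W = f x := hfx.symm
      _ ≤ ‖f x‖ := le_abs_self _
      _ ≤ ‖f‖ * ‖x‖ := f.le_opNorm x
      _ = ‖f‖ * W ^ (1 / p.toReal) := by rw [hnorm]
  rcases hW.eq_or_lt with hW0 | hW0
  · rw [← hW0]; positivity
  have hroot : W ^ (1 / q) ≤ ‖f‖ := by
    refine le_of_mul_le_mul_right ?_ (Real.rpow_pos_of_pos hW0 (1 / p.toReal))
    rwa [← Real.rpow_add hW0, hpq.symm.one_div_add_one_div, div_one, Real.rpow_one]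
  calc W = (W ^ (1 / q)) ^ q := by
        rw [← Real.rpow_mul hW, one_div_mul_cancel hpq.symm.ne_zero, Real.rpow_one]
    _ ≤ ‖f‖ ^ q := Real.rpow_le_rpow (by positivity) hroot (by linarith)

theorem sum_abs_apply_single_apply_rpow_le {p : ℝ≥0∞} [Fact (1 ≤ p)] {q : ℝ}
    (hpq : p.toReal.HolderConjugate q) {E : Type*} [SeminormedAddCommGroup E] [NormedSpace ℝ E]
    (T : PiLp p (fun _ : ι => ℝ) →L[ℝ] E →L[ℝ] ℝ) (y : E) :
    ∑ i, |T (PiLp.single p i 1) y| ^ q ≤ (‖T‖ * ‖y‖) ^ q := by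
  refine (sum_abs_apply_single_rpow_le hpq (T.flip y)).trans ?_
  gcongr
  · exact hpq.symm.nonneg
  · rw [← T.opNorm_flip]
    exact T.flip.le_opNorm y

theorem sum_rpow_sum_apply_mul_sq_le [Fact (1 ≤ (4 : ℝ≥0∞))] {κ : Type*} [Fintype κ]
    [DecidableEq κ] (T : PiLp 4 (fun _ : ι => ℝ) →L[ℝ] PiLp 4 (fun _ : κ => ℝ) →L[ℝ] ℝ)
    (w : κ → ℝ) :
    ∑ i, (∑ j, (T (PiLp.single 4 i 1) (PiLp.single 4 j 1) * w j) ^ 2) ^ (2 / 3 : ℝ)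
      ≤ 3 ^ (1 / 3 : ℝ) * (‖T‖ * ‖WithLp.toLp 4 w‖) ^ (4 / 3 : ℝ) := by
  set a := fun i j => T (PiLp.single 4 i 1) (PiLp.single 4 j 1)
  set y : (κ → Bool) → PiLp 4 (fun _ : κ => ℝ) :=
    fun ε => WithLp.toLp 4 fun j => boolSign (ε j) * w j
  have hy : ∀ ε, ‖y ε‖ = ‖WithLp.toLp 4 w‖ := by
    intro ε
    simp only [y, norm_toLp_four, mul_pow,
      show ∀ j, boolSign (ε j) ^ 4 = (boolSign (ε j) ^ 2) ^ 2 by intro j; ring, boolSign_sq,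
      one_pow, one_mul]
  have hTy : ∀ i ε, T (PiLp.single 4 i 1) (y ε) = ∑ j, boolSign (ε j) * (a i j * w j) := by
    intro i ε
    rw [apply_eq_sum_mul_apply_single (T (PiLp.single 4 i 1))]
    exact sum_congr rfl fun j _ => by simp only [y, a]; ring
  have hpq : (4 : ℝ≥0∞).toReal.HolderConjugate (4 / 3) := by
    rw [ENNReal.toReal_ofNat, Real.holderConjugate_iff]; norm_num
  set M := (‖T‖ * ‖WithLp.toLp 4 w‖) ^ (4 / 3 : ℝ)
  refine le_of_mul_le_mul_left ?_ (by positivity : (0 : ℝ) < 2 ^ Fintype.card κ)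
  calc 2 ^ Fintype.card κ * ∑ i, (∑ j, (a i j * w j) ^ 2) ^ (2 / 3 : ℝ)
      = ∑ i, 2 ^ Fintype.card κ * (∑ j, (a i j * w j) ^ 2) ^ (2 / 3 : ℝ) := mul_sum _ _ _
    _ ≤ ∑ i, 3 ^ (1 / 3 : ℝ) * ∑ ε : κ → Bool, |T (PiLp.single 4 i 1) (y ε)| ^ (4 / 3 : ℝ) :=
        sum_le_sum fun i _ => by
          simpa only [hTy] using khintchine_four_thirds fun j => a i j * w j
    _ = 3 ^ (1 / 3 : ℝ) * ∑ ε : κ → Bool, ∑ i, |T (PiLp.single 4 i 1) (y ε)| ^ (4 / 3 : ℝ) := by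
        rw [← mul_sum, sum_comm]
    _ ≤ 3 ^ (1 / 3 : ℝ) * ∑ _ε : κ → Bool, M := by
        gcongr with ε
        simpa only [hy] using sum_abs_apply_single_apply_rpow_le hpq T (y ε)
    _ = 2 ^ Fintype.card κ * (3 ^ (1 / 3 : ℝ) * M) := by
        simp only [sum_const, card_univ, Fintype.card_fun, Fintype.card_bool, nsmul_eq_mul]
        push_cast; ring

theorem sum_rpow_sum_apply_sq_mul_le [Fact (1 ≤ (4 : ℝ≥0∞))] {κ : Type*} [Fintype κ]
    [DecidableEq κ] (T : PiLp 4 (fun _ : ι => ℝ) →L[ℝ] PiLp 4 (fun _ : κ => ℝ) →L[ℝ] ℝ)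
    (v : κ → ℝ) (hv : ∀ j, 0 ≤ v j) :
    ∑ i, (∑ j, T (PiLp.single 4 i 1) (PiLp.single 4 j 1) ^ 2 * v j) ^ (2 / 3 : ℝ)
      ≤ (3 * ‖T‖ ^ 4 * ∑ j, v j ^ 2) ^ (1 / 3 : ℝ) := by
  set s := ∑ j, v j ^ 2
  have hs : 0 ≤ s := sum_nonneg fun j _ => sq_nonneg _
  have hnorm : ‖WithLp.toLp 4 fun j => √(v j)‖ = s ^ (1 / 4 : ℝ) := by
    simp only [norm_toLp_four, show ∀ j, √(v j) ^ 4 = (√(v j) ^ 2) ^ 2 by intro j; ring,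
      Real.sq_sqrt (hv _), s]
  calc ∑ i, (∑ j, T (PiLp.single 4 i 1) (PiLp.single 4 j 1) ^ 2 * v j) ^ (2 / 3 : ℝ)
      = ∑ i, (∑ j, (T (PiLp.single 4 i 1) (PiLp.single 4 j 1) * √(v j)) ^ 2) ^ (2 / 3 : ℝ) := by
        simp only [mul_pow, Real.sq_sqrt (hv _)]
    _ ≤ 3 ^ (1 / 3 : ℝ) * (‖T‖ * s ^ (1 / 4 : ℝ)) ^ (4 / 3 : ℝ) := by
        simpa only [hnorm] using sum_rpow_sum_apply_mul_sq_le T fun j => √(v j)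
    _ = 3 ^ (1 / 3 : ℝ) * ‖T‖ ^ (4 / 3 : ℝ) * s ^ (1 / 3 : ℝ) := by
        rw [Real.mul_rpow (norm_nonneg T) (by positivity), ← Real.rpow_mul hs]
        norm_num [mul_assoc]
    _ = (3 * ‖T‖ ^ 4 * s) ^ (1 / 3 : ℝ) := by
        rw [Real.mul_rpow (by positivity) hs, Real.mul_rpow (by norm_num) (by positivity),
          ← Real.rpow_natCast ‖T‖ 4, ← Real.rpow_mul (norm_nonneg T)]
        norm_num

end Duality

section NonnegMatrix

variable {ι κ : Type*} [Fintype ι] [Fintype κ]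

theorem sum_sum_mul_rpow_div_le (b : ι → κ → ℝ) (hb : ∀ i j, 0 ≤ b i j) :
    ∑ i, ∑ j, b i j * (∑ k, b k j) ^ (1 / 3 : ℝ) / (∑ k, b i k) ^ (1 / 3 : ℝ)
      ≤ ∑ i, (∑ j, b i j * √(∑ k, b k j)) ^ (2 / 3 : ℝ) := by
  have hcol : ∀ j, 0 ≤ ∑ k, b k j := fun j => sum_nonneg fun k _ => hb k j
  refine sum_le_sum fun i _ => ?_
  rw [← sum_div]
  refine div_le_of_le_mul₀ (Real.rpow_nonneg (sum_nonneg fun k _ => hb i k) _)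
    (Real.rpow_nonneg (sum_nonneg fun j _ => mul_nonneg (hb i j) (Real.sqrt_nonneg _)) _) ?_
  have h := Real.inner_le_weight_mul_Lp_of_nonneg univ (p := 3 / 2) (by norm_num) (b i)
    (fun j => (∑ k, b k j) ^ (1 / 3 : ℝ)) (hb i) (fun j => Real.rpow_nonneg (hcol j) _)
  simp only [← Real.rpow_mul (hcol _), Real.sqrt_eq_rpow] at h ⊢
  calc _ ≤ _ := h
    _ = _ := by norm_num; ring

theorem sq_sum_sum_le_mul (b : ι → κ → ℝ) (hb : ∀ i j, 0 ≤ b i j) :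
    (∑ i, ∑ j, b i j) ^ 2
      ≤ (∑ i, (∑ j, b i j * √(∑ k, b k j)) ^ (2 / 3 : ℝ))
        * ∑ j, (∑ i, b i j * √(∑ k, b i k)) ^ (2 / 3 : ℝ) := by
  have hcol : ∀ j, 0 ≤ ∑ k, b k j := fun j => sum_nonneg fun k _ => hb k j
  have hrow : ∀ i, 0 ≤ ∑ k, b i k := fun i => sum_nonneg fun k _ => hb i k
  have cs := sum_sq_le_sum_mul_sum_of_sq_le_mul (univ : Finset (ι × κ))
    (r := fun p => b p.1 p.2)
    (f := fun p => b p.1 p.2 * (∑ k, b k p.2) ^ (1 / 3 : ℝ) / (∑ k, b p.1 k) ^ (1 / 3 : ℝ))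
    (g := fun p => b p.1 p.2 * (∑ k, b p.1 k) ^ (1 / 3 : ℝ) / (∑ k, b k p.2) ^ (1 / 3 : ℝ))
    (fun p _ => by have := hb p.1 p.2; have := hcol p.2; have := hrow p.1; positivity)
    (fun p _ => by have := hb p.1 p.2; have := hcol p.2; have := hrow p.1; positivity)
    (fun ⟨i, j⟩ _ => by
      rcases (hb i j).eq_or_lt with h0 | hpos
      · simp [← h0]
      · have hC : 0 < (∑ k, b k j) ^ (1 / 3 : ℝ) :=
          Real.rpow_pos_of_pos (hpos.trans_le (single_le_sum (fun k _ => hb k j) (mem_univ i))) _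
        have hD : 0 < (∑ k, b i k) ^ (1 / 3 : ℝ) :=
          Real.rpow_pos_of_pos (hpos.trans_le (single_le_sum (fun k _ => hb i k) (mem_univ j))) _
        apply le_of_eq
        field_simp)
  simp only [Fintype.sum_prod_type] at cs
  refine cs.trans (mul_le_mul (sum_sum_mul_rpow_div_le b hb) ?_
    (sum_nonneg fun i _ => sum_nonneg fun j _ => by
      have := hb i j; have := hcol j; have := hrow i; positivity)
    (sum_nonneg fun i _ => Real.rpow_nonneg
      (sum_nonneg fun j _ => mul_nonneg (hb i j) (Real.sqrt_nonneg _)) _))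
  rw [sum_comm]
  exact sum_sum_mul_rpow_div_le (fun j i => b i j) (fun j i => hb i j)

theorem sq_sum_sum_le_of_forall_sum_rpow_le (b : ι → κ → ℝ) (hb : ∀ i j, 0 ≤ b i j) {K : ℝ}
    (hK : 0 ≤ K)
    (hrow : ∀ v : κ → ℝ, (∀ j, 0 ≤ v j) →
      ∑ i, (∑ j, b i j * v j) ^ (2 / 3 : ℝ) ≤ (K * ∑ j, v j ^ 2) ^ (1 / 3 : ℝ))
    (hcol : ∀ u : ι → ℝ, (∀ i, 0 ≤ u i) →
      ∑ j, (∑ i, b i j * u i) ^ (2 / 3 : ℝ) ≤ (K * ∑ i, u i ^ 2) ^ (1 / 3 : ℝ)) :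
    (∑ i, ∑ j, b i j) ^ 2 ≤ K := by
  set P := ∑ i, ∑ j, b i j
  have hP : 0 ≤ P := sum_nonneg fun i _ => sum_nonneg fun j _ => hb i j
  -- test both bounds against the square roots of the column and row sums
  have hrow' := hrow (fun j => √(∑ k, b k j)) fun j => Real.sqrt_nonneg _
  have hcol' := hcol (fun i => √(∑ k, b i k)) fun i => Real.sqrt_nonneg _
  simp only [Real.sq_sqrt (sum_nonneg fun k _ => hb _ _)] at hrow' hcol'
  rw [sum_comm] at hrow'
  set r := (K * P) ^ (1 / 3 : ℝ)
  have hr : 0 ≤ r := by positivity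
  have hPr : P ≤ r := by
    refine (pow_le_pow_iff_left₀ hP hr two_ne_zero).mp ?_
    calc P ^ 2 ≤ _ := sq_sum_sum_le_mul b hb
      _ ≤ r * r := mul_le_mul hrow' hcol' (sum_nonneg fun j _ => Real.rpow_nonneg
          (sum_nonneg fun i _ => mul_nonneg (hb i j) (Real.sqrt_nonneg _)) _) hr
      _ = r ^ 2 := (sq r).symm
  have hcube : P ^ 2 * P ≤ K * P := by
    calc P ^ 2 * P = P ^ 3 := by ring
      _ ≤ r ^ 3 := pow_le_pow_left₀ hP hPr 3
      _ = K * P := by rw [← Real.rpow_natCast, ← Real.rpow_mul (by positivity)]; norm_num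
  rcases hP.eq_or_lt with hP0 | hP0
  · rw [← hP0]; simpa using hK
  · exact le_of_mul_le_mul_right hcube hP0

end NonnegMatrix

end HardyLittlewood

open HardyLittlewood in
/-- Classical bilinear Hardy–Littlewood inequality at the endpoint `p = 4`. -/
theorem bilinear_hardy_littlewood_p_four [Fact (1 ≤ (4 : ℝ≥0∞))] (n : ℕ)
    (T : PiLp 4 (fun _ : Fin n => ℝ) →L[ℝ] PiLp 4 (fun _ : Fin n => ℝ) →L[ℝ] ℝ) :
    (∑ i : Fin n, ∑ j : Fin n,
        |T ((WithLp.equiv 4 (Fin n → ℝ)).symm (Pi.single i 1))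
           ((WithLp.equiv 4 (Fin n → ℝ)).symm (Pi.single j 1))| ^ (2 : ℝ)) ^ ((1 : ℝ) / 2)
      ≤ Real.sqrt 2 * ‖T‖ := by
  simp only [WithLp.equiv_symm_apply, PiLp.toLp_single, Real.rpow_two, sq_abs,
    ← Real.sqrt_eq_rpow]
  set b : Fin n → Fin n → ℝ := fun i j => T (PiLp.single 4 i 1) (PiLp.single 4 j 1) ^ 2
  have hb : ∀ i j, 0 ≤ b i j := fun i j => sq_nonneg _
  have hsq : (∑ i, ∑ j, b i j) ^ 2 ≤ 3 * ‖T‖ ^ 4 :=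
    sq_sum_sum_le_of_forall_sum_rpow_le b hb (by positivity) (sum_rpow_sum_apply_sq_mul_le T)
      (by simpa only [ContinuousLinearMap.flip_apply, ContinuousLinearMap.opNorm_flip]
        using sum_rpow_sum_apply_sq_mul_le T.flip)
  have hsum : ∑ i, ∑ j, b i j ≤ 2 * ‖T‖ ^ 2 := by
    refine (pow_le_pow_iff_left₀ (sum_nonneg fun i _ => sum_nonneg fun j _ => hb i j)
      (by positivity) two_ne_zero).mp ?_
    nlinarith [pow_nonneg (norm_nonneg T) 4]
  calc √(∑ i, ∑ j, b i j) ≤ √(2 * ‖T‖ ^ 2) := Real.sqrt_le_sqrt hsum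
    _ = √2 * ‖T‖ := by rw [Real.sqrt_mul zero_le_two, Real.sqrt_sq (norm_nonneg T)]
end

section
/- Let s ≥ 2 and let T : ℓ_∞^n × ··· × ℓ_∞^n → ℝ be an m-linear form (m ≥ 2). If s = 1/(1 - θ) with 1/2 ≤ θ < 1, then for each fixed i ∈ {1,...,m}, ∑_{j_i=1}^n (∑_{ĵ_i} |T(e_{j_1},...,e_{j_m})|^s)^{1/s} ≤ 2^{(m-1)(1-θ)} ‖T‖, where ∑_{ĵ_i} is the sum over all indices except j_i. -/
open Finset


open Finset
set_option maxHeartbeats 1000000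

noncomputable section
namespace KhAux


/-- sign of a boolean -/
def sg (b : Bool) : ℝ := if b then 1 else -1

lemma sg_mul_self (b : Bool) : sg b * sg b = 1 := by cases b <;> simp [sg]

lemma abs_sg (b : Bool) : |sg b| = 1 := by cases b <;> simp [sg]

lemma sg_not (b : Bool) : sg (!b) = - sg b := by cases b <;> simp [sg]

variable {ι : Type} [Fintype ι] [DecidableEq ι]

/-- Walsh function -/
def w (S : Finset ι) (x : ι → Bool) : ℝ := ∏ i ∈ S, sg (x i)

lemma sum_w_mul_w (S T : Finset ι) :
    ∑ x : ι → Bool, w S x * w T x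
      = if S = T then (2 : ℝ) ^ (Fintype.card ι) else 0 := by
  have key : ∀ x : ι → Bool, w S x * w T x
      = ∏ i : ι, ((if i ∈ S then sg (x i) else 1) * (if i ∈ T then sg (x i) else 1)) := by
    intro x
    rw [Finset.prod_mul_distrib, w, w, ← Finset.prod_filter, ← Finset.prod_filter]
    simp [Finset.filter_mem_eq_inter]
  have h2 := Finset.prod_univ_sum (fun _ : ι => (univ : Finset Bool))
      (fun i b => (if i ∈ S then sg b else 1) * (if i ∈ T then sg b else 1))
  rw [Fintype.piFinset_univ] at h2
  calc ∑ x : ι → Bool, w S x * w T x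
      = ∑ x : ι → Bool,
          ∏ i : ι, ((if i ∈ S then sg (x i) else 1) * (if i ∈ T then sg (x i) else 1)) :=
        Finset.sum_congr rfl fun x _ => key x
    _ = ∏ i : ι, ∑ b : Bool, ((if i ∈ S then sg b else 1) * (if i ∈ T then sg b else 1)) :=
        h2.symm
    _ = if S = T then (2 : ℝ) ^ (Fintype.card ι) else 0 := by
        by_cases h : S = T
        · subst h
          rw [if_pos rfl]
          have : ∀ i : ι, (∑ b : Bool, ((if i ∈ S then sg b else 1) * (if i ∈ S then sg b else 1))) = 2 := by
            intro i
            by_cases hi : i ∈ S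
            · simp only [if_pos hi, Fintype.sum_bool]; norm_num [sg]
            · simp only [if_neg hi, Fintype.sum_bool]; norm_num
          rw [Finset.prod_congr rfl fun i _ => this i]
          simp [Finset.prod_const, Finset.card_univ]
        · rw [if_neg h]
          have : ∃ i : ι, (i ∈ S) ≠ (i ∈ T) := by
            by_contra hc
            push_neg at hc
            exact h (Finset.ext fun i => by
              have := hc i; constructor <;> intro hh <;> simp_all)
          obtain ⟨i, hi⟩ := this
          apply Finset.prod_eq_zero (Finset.mem_univ i)
          by_cases h1 : i ∈ S
          · have h2 : i ∉ T := by intro h2; exact hi (by simp [h1, h2])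
            simp [h1, h2, sg]
          · have h2 : i ∈ T := by by_contra h2; exact hi (by simp [h1, h2])
            simp [h1, h2, sg]

lemma sum_w_w (x y : ι → Bool) :
    ∑ S : Finset ι, w S x * w S y
      = if x = y then (2 : ℝ) ^ (Fintype.card ι) else 0 := by
  have : ∀ S : Finset ι, w S x * w S y = ∏ i ∈ S, (sg (x i) * sg (y i)) := by
    intro S; rw [w, w, Finset.prod_mul_distrib]
  rw [Finset.sum_congr rfl fun S _ => this S]
  have hpa := Finset.prod_add (fun i : ι => sg (x i) * sg (y i)) (fun _ : ι => (1:ℝ)) univ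
  rw [Finset.powerset_univ] at hpa
  simp only [Finset.prod_const_one, mul_one] at hpa
  rw [← hpa]
  by_cases h : x = y
  · subst h
    rw [if_pos rfl]
    rw [Finset.prod_congr rfl fun i _ => by rw [sg_mul_self]]
    norm_num [Finset.card_univ]
  · rw [if_neg h]
    have : ∃ i, x i ≠ y i := by
      by_contra hc; push_neg at hc; exact h (funext hc)
    obtain ⟨i, hi⟩ := this
    apply Finset.prod_eq_zero (Finset.mem_univ i)
    cases hx : x i <;> cases hy : y i <;> simp_all [sg]

/-- (non-normalized) Fourier coefficient -/
def fh (f : (ι → Bool) → ℝ) (S : Finset ι) : ℝ := ∑ x : ι → Bool, f x * w S x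

lemma inversion (f : (ι → Bool) → ℝ) (x : ι → Bool) :
    ∑ S : Finset ι, fh f S * w S x = (2 : ℝ) ^ (Fintype.card ι) * f x := by
  simp only [fh, Finset.sum_mul]
  rw [Finset.sum_comm]
  have : ∀ y : ι → Bool, ∑ S : Finset ι, f y * w S y * w S x
      = f y * (if y = x then (2 : ℝ) ^ (Fintype.card ι) else 0) := by
    intro y
    rw [← sum_w_w y x, Finset.mul_sum]
    exact Finset.sum_congr rfl fun S _ => by ring
  rw [Finset.sum_congr rfl fun y _ => this y]
  simp only [mul_ite, mul_zero]
  rw [Finset.sum_ite_eq' univ x (fun y => f y * (2:ℝ) ^ (Fintype.card ι))]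
  simp [mul_comm]

lemma polarization (f g : (ι → Bool) → ℝ) :
    ∑ S : Finset ι, fh f S * fh g S = (2 : ℝ) ^ (Fintype.card ι) * ∑ x : ι → Bool, f x * g x := by
  have : ∀ S : Finset ι, fh f S * fh g S = ∑ x : ι → Bool, g x * (fh f S * w S x) := by
    intro S
    have : fh g S = ∑ x : ι → Bool, g x * w S x := rfl
    rw [this, Finset.mul_sum]
    exact Finset.sum_congr rfl fun x _ => by ring
  rw [Finset.sum_congr rfl fun S _ => this S, Finset.sum_comm]
  rw [Finset.mul_sum]
  refine Finset.sum_congr rfl fun x _ => ?_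
  rw [← Finset.mul_sum, inversion f x]
  ring

lemma parseval (f : (ι → Bool) → ℝ) :
    ∑ S : Finset ι, (fh f S) ^ 2 = (2 : ℝ) ^ (Fintype.card ι) * ∑ x : ι → Bool, (f x) ^ 2 := by
  have := polarization f f
  simpa [sq] using this



def flip (i : ι) (x : ι → Bool) : ι → Bool := Function.update x i (!(x i))

lemma flip_invol (i : ι) : Function.Involutive (flip (ι := ι) i) := by
  intro x
  funext j
  by_cases h : j = i
  · subst h; simp [flip]
  · simp [flip, Function.update_of_ne h]

lemma sum_comp_flip (i : ι) (g : (ι → Bool) → ℝ) :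
    ∑ x : ι → Bool, g (flip i x) = ∑ x : ι → Bool, g x :=
  Fintype.sum_bijective _ (flip_invol i).bijective _ _ (fun _ => rfl)

lemma w_flip (S : Finset ι) (i : ι) (x : ι → Bool) :
    w S (flip i x) = (if i ∈ S then -1 else 1) * w S x := by
  by_cases h : i ∈ S
  · rw [if_pos h, w, w, ← Finset.mul_prod_erase S _ h, ← Finset.mul_prod_erase S (fun j => sg (x j)) h]
    have h1 : sg (flip i x i) = - sg (x i) := by simp [flip, sg_not]
    have h2 : ∀ j ∈ S.erase i, sg (flip i x j) = sg (x j) := by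
      intro j hj
      have : j ≠ i := (Finset.mem_erase.mp hj).1
      simp [flip, Function.update_of_ne this]
    rw [Finset.prod_congr rfl h2, h1]
    ring
  · rw [if_neg h, one_mul, w, w]
    refine Finset.prod_congr rfl fun j hj => ?_
    have : j ≠ i := fun hji => h (hji ▸ hj)
    simp [flip, Function.update_of_ne this]

def flipAll (x : ι → Bool) : ι → Bool := fun j => !(x j)

lemma flipAll_invol : Function.Involutive (flipAll (ι := ι)) := by
  intro x; funext j; simp [flipAll]

lemma sum_comp_flipAll (g : (ι → Bool) → ℝ) :
    ∑ x : ι → Bool, g (flipAll x) = ∑ x : ι → Bool, g x :=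
  Fintype.sum_bijective _ flipAll_invol.bijective _ _ (fun _ => rfl)

lemma w_flipAll (S : Finset ι) (x : ι → Bool) :
    w S (flipAll x) = (-1) ^ S.card * w S x := by
  rw [w, w, ← Finset.prod_const, ← Finset.prod_mul_distrib]
  exact Finset.prod_congr rfl fun j _ => by simp [flipAll, sg_not]

theorem khinchin_sq (b : ι → ℝ) :
    (∑ i, b i ^ 2) * 4 ^ (Fintype.card ι)
      ≤ 2 * (∑ x : ι → Bool, |∑ i, sg (x i) * b i|) ^ 2 := by
  classical
  set k := Fintype.card ι with hk
  set L : (ι → Bool) → ℝ := fun x => ∑ i, sg (x i) * b i with hL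
  set f : (ι → Bool) → ℝ := fun x => |L x| with hf
  have hf0 : ∀ x, 0 ≤ f x := fun x => abs_nonneg _
  -- orthogonality of single signs
  have sgor : ∀ p q : ι, ∑ x : ι → Bool, sg (x p) * sg (x q)
      = if p = q then (2:ℝ) ^ k else 0 := by
    intro p q
    have h := sum_w_mul_w ({p} : Finset ι) ({q} : Finset ι)
    simpa [w, Finset.singleton_inj] using h
  -- L2 norm of L
  have hL2 : ∑ x : ι → Bool, (L x) ^ 2 = (2:ℝ) ^ k * ∑ i, b i ^ 2 := by
    have expand : ∀ x, (L x) ^ 2 = ∑ p, ∑ q, (b p * b q) * (sg (x p) * sg (x q)) := by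
      intro x
      rw [sq, hL]
      rw [Finset.sum_mul_sum]
      exact Finset.sum_congr rfl fun p _ => Finset.sum_congr rfl fun q _ => by ring
    rw [Finset.sum_congr rfl fun x _ => expand x]
    rw [Finset.sum_comm]
    have : ∀ p, ∑ x : ι → Bool, ∑ q, (b p * b q) * (sg (x p) * sg (x q))
        = (2:ℝ)^k * b p ^ 2 := by
      intro p
      rw [Finset.sum_comm]
      have : ∀ q, ∑ x : ι → Bool, (b p * b q) * (sg (x p) * sg (x q))
          = if q = p then (b p * b q) * (2:ℝ)^k else 0 := by
        intro q
        rw [← Finset.mul_sum, sgor p q]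
        by_cases h : p = q
        · subst h; simp
        · rw [if_neg h, if_neg (Ne.symm h), mul_zero]
      rw [Finset.sum_congr rfl fun q _ => this q, Finset.sum_ite_eq' univ p]
      simp [sq]; ring
    rw [Finset.sum_congr rfl fun p _ => this p, ← Finset.mul_sum]
  -- evenness
  have heven : ∀ S : Finset ι, S.card = 1 → fh f S = 0 := by
    intro S hS
    have h1 : fh f S = ∑ x : ι → Bool, f (flipAll x) * w S (flipAll x) := by
      rw [fh, ← sum_comp_flipAll (fun x => f x * w S x)]
    have hfe : ∀ x, f (flipAll x) = f x := by
      intro x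
      have : L (flipAll x) = - L x := by
        rw [hL, ← Finset.sum_neg_distrib]
        exact Finset.sum_congr rfl fun j _ => by simp [flipAll, sg_not]
      simp [hf, this]
    have : fh f S = - fh f S := by
      calc fh f S = ∑ x : ι → Bool, f (flipAll x) * w S (flipAll x) := h1
        _ = ∑ x : ι → Bool, -(f x * w S x) := Finset.sum_congr rfl fun x _ => by
            rw [hfe x, w_flipAll, hS, pow_one]; ring
        _ = - ∑ x : ι → Bool, f x * w S x := by rw [Finset.sum_neg_distrib]
        _ = - fh f S := rfl
    linarith
  -- Fourier coefficients of discrete derivatives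
  have hDf : ∀ (i : ι) (S : Finset ι),
      fh (fun x => (f x - f (flip i x)) / 2) S = if i ∈ S then fh f S else 0 := by
    intro i S
    have h1 : ∑ x : ι → Bool, f (flip i x) * w S x
        = (if i ∈ S then -1 else 1) * fh f S := by
      have := sum_comp_flip i (fun x => f x * w S (flip i x))
      calc ∑ x : ι → Bool, f (flip i x) * w S x
          = ∑ x : ι → Bool, f (flip i x) * w S (flip i (flip i x)) := by
            exact Finset.sum_congr rfl fun x _ => by rw [flip_invol i x]
        _ = ∑ x : ι → Bool, f x * w S (flip i x) := this
        _ = (if i ∈ S then -1 else 1) * fh f S := by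
            rw [fh, Finset.mul_sum]
            exact Finset.sum_congr rfl fun x _ => by rw [w_flip]; ring
    have h2 : fh (fun x => (f x - f (flip i x)) / 2) S
        = (fh f S - ∑ x : ι → Bool, f (flip i x) * w S x) / 2 := by
      show ∑ x : ι → Bool, ((f x - f (flip i x)) / 2) * w S x = _
      calc ∑ x : ι → Bool, ((f x - f (flip i x)) / 2) * w S x
          = ∑ x : ι → Bool, (f x * w S x - f (flip i x) * w S x) / 2 :=
            Finset.sum_congr rfl fun x _ => by ring
        _ = (∑ x : ι → Bool, (f x * w S x - f (flip i x) * w S x)) / 2 :=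
            (Finset.sum_div _ _ _).symm
        _ = (fh f S - ∑ x : ι → Bool, f (flip i x) * w S x) / 2 := by
            rw [Finset.sum_sub_distrib]; rfl
    rw [h2, h1]
    by_cases h : i ∈ S
    · rw [if_pos h, if_pos h]; ring
    · rw [if_neg h, if_neg h]; ring
  -- pointwise LO inequality
  have hpoint : ∀ x, ∑ i, (f x - f (flip i x)) / 2 ≤ f x := by
    intro x
    have hLflip : ∀ i, L (flip i x) = L x - 2 * sg (x i) * b i := by
      intro i
      show ∑ j, sg (flip i x j) * b j = (∑ j, sg (x j) * b j) - 2 * sg (x i) * b i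
      have : ∀ j, sg (flip i x j) * b j
          = sg (x j) * b j + (if j = i then -2 * sg (x i) * b i else 0) := by
        intro j
        by_cases h : j = i
        · subst h; simp [flip, sg_not]; ring
        · simp [flip, Function.update_of_ne h, h]
      rw [Finset.sum_congr rfl fun j _ => this j, Finset.sum_add_distrib,
        Finset.sum_ite_eq' univ i]
      simp only [Finset.mem_univ, if_true]
      ring
    have hsum : ∑ i, L (flip i x) = ((k : ℝ) - 2) * L x := by
      rw [Finset.sum_congr rfl fun i _ => hLflip i, Finset.sum_sub_distrib]
      simp only [Finset.sum_const, Finset.card_univ, nsmul_eq_mul, ← hk]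
      have : ∑ i, 2 * sg (x i) * b i = 2 * L x := by
        show _ = 2 * ∑ i, sg (x i) * b i
        rw [Finset.mul_sum]
        exact Finset.sum_congr rfl fun i _ => by ring
      rw [this]; ring
    have habs : ((k : ℝ) - 2) * f x ≤ ∑ i, f (flip i x) := by
      calc ((k : ℝ) - 2) * f x ≤ |((k : ℝ) - 2)| * |L x| := by
            rw [hf]; exact mul_le_mul_of_nonneg_right (le_abs_self _) (abs_nonneg _)
        _ = |((k : ℝ) - 2) * L x| := (abs_mul _ _).symm
        _ = |∑ i, L (flip i x)| := by rw [hsum]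
        _ ≤ ∑ i, |L (flip i x)| := Finset.abs_sum_le_sum_abs _ _
        _ = ∑ i, f (flip i x) := rfl
    have : ∑ i, (f x - f (flip i x)) / 2
        = ((k:ℝ) * f x - ∑ i, f (flip i x)) / 2 := by
      rw [← Finset.sum_div, Finset.sum_sub_distrib]
      simp [Finset.sum_const, Finset.card_univ, ← hk]
    rw [this]
    linarith
  -- spectral inequality
  have hstar : ∑ S : Finset ι, (S.card : ℝ) * (fh f S) ^ 2
      ≤ ∑ S : Finset ι, (fh f S) ^ 2 := by
    have hpol : ∀ i : ι, ∑ S : Finset ι, (if i ∈ S then fh f S else 0) * fh f S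
        = (2:ℝ)^k * ∑ x : ι → Bool, (f x - f (flip i x)) / 2 * f x := by
      intro i
      have := polarization (fun x => (f x - f (flip i x)) / 2) f
      rw [← this]
      exact Finset.sum_congr rfl fun S _ => by rw [hDf i S]
    have h1 : ∑ S : Finset ι, (S.card : ℝ) * (fh f S) ^ 2
        = (2:ℝ)^k * ∑ x : ι → Bool, (∑ i, (f x - f (flip i x)) / 2) * f x := by
      have swap : ∑ S : Finset ι, (S.card : ℝ) * (fh f S) ^ 2
          = ∑ i : ι, ∑ S : Finset ι, (if i ∈ S then fh f S else 0) * fh f S := by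
        rw [Finset.sum_comm]
        refine Finset.sum_congr rfl fun S _ => ?_
        have : ∀ i : ι, (if i ∈ S then fh f S else 0) * fh f S
            = if i ∈ S then (fh f S)^2 else 0 := by
          intro i; by_cases h : i ∈ S <;> simp [h, sq]
        rw [Finset.sum_congr rfl fun i _ => this i]
        rw [Finset.sum_ite_mem, Finset.univ_inter, Finset.sum_const]
        simp [nsmul_eq_mul]
      rw [swap, Finset.sum_congr rfl fun i (_ : i ∈ univ) => hpol i, ← Finset.mul_sum]
      congr 1
      rw [Finset.sum_comm]
      refine Finset.sum_congr rfl fun x _ => ?_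
      rw [Finset.sum_mul]
    rw [h1, parseval f]
    have hp : ∀ x, (∑ i, (f x - f (flip i x)) / 2) * f x ≤ f x ^ 2 := by
      intro x
      rw [sq]
      exact mul_le_mul_of_nonneg_right (hpoint x) (hf0 x)
    have : ∑ x : ι → Bool, (∑ i, (f x - f (flip i x)) / 2) * f x
        ≤ ∑ x : ι → Bool, f x ^ 2 := Finset.sum_le_sum fun x _ => hp x
    have h2k : (0:ℝ) ≤ (2:ℝ)^k := by positivity
    exact mul_le_mul_of_nonneg_left this h2k
  -- conclusion on Fourier side
  have hconc : ∑ S : Finset ι, (fh f S) ^ 2 ≤ 2 * (fh f ∅) ^ 2 := by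
    have herase : ∑ S ∈ univ.erase (∅ : Finset ι), (fh f S) ^ 2
        ≤ ∑ S ∈ univ.erase (∅ : Finset ι), ((S.card : ℝ) - 1) * (fh f S) ^ 2 := by
      refine Finset.sum_le_sum fun S hS => ?_
      have hSne : S ≠ ∅ := (Finset.mem_erase.mp hS).1
      rcases Nat.lt_or_ge S.card 2 with h | h
      · have : S.card = 1 := by
          have := Finset.card_pos.mpr (Finset.nonempty_of_ne_empty hSne)
          omega
        rw [heven S this]
        simp
      · have : (1:ℝ) ≤ (S.card : ℝ) - 1 := by
          have : (2:ℝ) ≤ (S.card : ℝ) := by exact_mod_cast h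
          linarith
        nlinarith [sq_nonneg (fh f S)]
    have hback : ∑ S ∈ univ.erase (∅ : Finset ι), ((S.card : ℝ) - 1) * (fh f S) ^ 2
        = ∑ S : Finset ι, ((S.card : ℝ) - 1) * (fh f S) ^ 2 + (fh f ∅) ^ 2 := by
      have := Finset.add_sum_erase univ (fun S : Finset ι => ((S.card : ℝ) - 1) * (fh f S) ^ 2)
        (Finset.mem_univ (∅ : Finset ι))
      simp only [Finset.card_empty, Nat.cast_zero] at this
      linarith [this]
    have hsplit : ∑ S : Finset ι, ((S.card : ℝ) - 1) * (fh f S) ^ 2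
        = ∑ S : Finset ι, (S.card : ℝ) * (fh f S) ^ 2 - ∑ S : Finset ι, (fh f S) ^ 2 := by
      rw [← Finset.sum_sub_distrib]
      exact Finset.sum_congr rfl fun S _ => by ring
    have htot := Finset.add_sum_erase univ (fun S : Finset ι => (fh f S) ^ 2)
      (Finset.mem_univ (∅ : Finset ι))
    have h0 : ∑ S : Finset ι, ((S.card : ℝ) - 1) * (fh f S) ^ 2 ≤ 0 := by
      rw [hsplit]; linarith [hstar]
    calc ∑ S : Finset ι, (fh f S) ^ 2
        = (fh f ∅)^2 + ∑ S ∈ univ.erase (∅ : Finset ι), (fh f S) ^ 2 := htot.symm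
      _ ≤ (fh f ∅)^2 + (∑ S : Finset ι, ((S.card : ℝ) - 1) * (fh f S) ^ 2 + (fh f ∅) ^ 2) := by
          have := herase.trans (le_of_eq hback)
          linarith
      _ ≤ 2 * (fh f ∅) ^ 2 := by linarith
  -- put everything together
  have hfempty : fh f ∅ = ∑ x : ι → Bool, f x := by
    rw [fh]
    exact Finset.sum_congr rfl fun x _ => by simp [w]
  have hparse := parseval f
  have hff : ∑ x : ι → Bool, f x ^ 2 = (2:ℝ)^k * ∑ i, b i ^ 2 := by
    rw [← hL2]
    exact Finset.sum_congr rfl fun x _ => by rw [hf, sq_abs]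
  have hmain : (2:ℝ)^(Fintype.card ι) * ((2:ℝ)^k * ∑ i, b i ^ 2)
      ≤ 2 * (∑ x : ι → Bool, f x) ^ 2 := by
    rw [hparse, hff, hfempty] at hconc
    exact hconc
  have h4 : (4:ℝ)^k = (2:ℝ)^k * (2:ℝ)^k := by rw [← mul_pow]; norm_num
  calc (∑ i, b i ^ 2) * 4 ^ k = (2:ℝ)^(Fintype.card ι) * ((2:ℝ)^k * ∑ i, b i ^ 2) := by
        rw [h4, ← hk]; ring
    _ ≤ 2 * (∑ x : ι → Bool, f x) ^ 2 := hmain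
    _ = 2 * (∑ x : ι → Bool, |∑ i, sg (x i) * b i|) ^ 2 := rfl


lemma sg_orth (p q : ι) :
    ∑ x : ι → Bool, sg (x p) * sg (x q)
      = if p = q then (2:ℝ) ^ (Fintype.card ι) else 0 := by
  have h := sum_w_mul_w ({p} : Finset ι) ({q} : Finset ι)
  simpa [w, Finset.singleton_inj] using h

theorem khinchin_sqrt (b : ι → ℝ) :
    Real.sqrt (∑ i, b i ^ 2) * 2 ^ (Fintype.card ι)
      ≤ Real.sqrt 2 * ∑ x : ι → Bool, |∑ i, sg (x i) * b i| := by
  have h := khinchin_sq b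
  have hA : (0:ℝ) ≤ ∑ x : ι → Bool, |∑ i, sg (x i) * b i| :=
    Finset.sum_nonneg fun x _ => abs_nonneg _
  have h1 : Real.sqrt ((∑ i, b i ^ 2) * 4 ^ (Fintype.card ι))
      = Real.sqrt (∑ i, b i ^ 2) * 2 ^ (Fintype.card ι) := by
    rw [Real.sqrt_mul (Finset.sum_nonneg fun i _ => sq_nonneg _)]
    congr 1
    rw [show (4:ℝ)^(Fintype.card ι) = ((2:ℝ)^(Fintype.card ι))^2 by
      rw [← pow_mul, pow_mul']; norm_num]
    exact Real.sqrt_sq (by positivity)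
  have h2 : Real.sqrt (2 * (∑ x : ι → Bool, |∑ i, sg (x i) * b i|) ^ 2)
      = Real.sqrt 2 * ∑ x : ι → Bool, |∑ i, sg (x i) * b i| := by
    rw [Real.sqrt_mul (by norm_num), Real.sqrt_sq hA]
  calc Real.sqrt (∑ i, b i ^ 2) * 2 ^ (Fintype.card ι)
      = Real.sqrt ((∑ i, b i ^ 2) * 4 ^ (Fintype.card ι)) := h1.symm
    _ ≤ Real.sqrt (2 * (∑ x : ι → Bool, |∑ i, sg (x i) * b i|) ^ 2) := Real.sqrt_le_sqrt h
    _ = Real.sqrt 2 * ∑ x : ι → Bool, |∑ i, sg (x i) * b i| := h2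

section Glue

variable {κ : Type} [DecidableEq κ]

def glue (k₀ : κ) {β : Type} (v : β) (g : {k : κ // k ≠ k₀} → β) : κ → β :=
  fun k => if h : k = k₀ then v else g ⟨k, h⟩

lemma glue_at (k₀ : κ) {β : Type} (v : β) (g : {k : κ // k ≠ k₀} → β) :
    glue k₀ v g k₀ = v := dif_pos rfl

lemma glue_ne (k₀ : κ) {β : Type} (v : β) (g : {k : κ // k ≠ k₀} → β)
    (k : {k : κ // k ≠ k₀}) : glue k₀ v g k.val = g k := by
  rw [glue, dif_neg k.prop]

def glueEquiv (k₀ : κ) (β : Type) : β × ({k : κ // k ≠ k₀} → β) ≃ (κ → β) where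
  toFun p := glue k₀ p.1 p.2
  invFun j := (j k₀, fun k => j k.val)
  left_inv p := by
    refine Prod.ext (glue_at _ _ _) (funext fun k => ?_)
    exact glue_ne k₀ p.1 p.2 k
  right_inv j := by
    funext k
    by_cases h : k = k₀
    · subst h; exact glue_at _ _ _
    · exact dif_neg h

lemma sum_glue [Fintype κ] (k₀ : κ) {β : Type} [Fintype β] [DecidableEq β]
    (G : (κ → β) → ℝ) :
    ∑ j : κ → β, G j = ∑ v : β, ∑ g : {k : κ // k ≠ k₀} → β, G (glue k₀ v g) := by
  rw [← Equiv.sum_comp (glueEquiv k₀ β) G, Fintype.sum_prod_type]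
  rfl

lemma prod_split [Fintype κ] (k₀ : κ) (F : κ → ℝ) :
    ∏ k, F k = F k₀ * ∏ k : {k : κ // k ≠ k₀}, F k.val := by
  rw [← Finset.mul_prod_erase univ F (Finset.mem_univ k₀)]
  congr 1
  exact Finset.prod_subtype (univ.erase k₀)
    (fun k => by simp [Finset.mem_erase]) F

end Glue

/-- multiple Rademacher sum -/
def SS {κ : Type} [Fintype κ] [DecidableEq κ] (a : (κ → ι) → ℝ) (ε : κ → ι → Bool) : ℝ :=
  ∑ j : κ → ι, (∏ k, sg (ε k (j k))) * a j

lemma SS_def {κ : Type} [Fintype κ] [DecidableEq κ] (a : (κ → ι) → ℝ) (ε : κ → ι → Bool) :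
    SS a ε = ∑ j : κ → ι, (∏ k, sg (ε k (j k))) * a j := rfl

theorem max_bound {κ : Type} [Fintype κ] [DecidableEq κ] (a : (κ → ι) → ℝ) (j : κ → ι) :
    |a j| * ((2:ℝ) ^ Fintype.card ι) ^ (Fintype.card κ) ≤ ∑ ε : κ → ι → Bool, |SS a ε| := by
  classical
  set c : ℝ := (2:ℝ) ^ Fintype.card ι with hc
  have hc0 : (0:ℝ) ≤ c := by positivity
  have key : ∑ ε : κ → ι → Bool, (∏ k, sg (ε k (j k))) * SS a ε
      = c ^ (Fintype.card κ) * a j := by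
    have step1 : ∀ ε : κ → ι → Bool, (∏ k, sg (ε k (j k))) * SS a ε
        = ∑ j' : κ → ι, (∏ k, sg (ε k (j k)) * sg (ε k (j' k))) * a j' := by
      intro ε
      rw [SS_def, Finset.mul_sum]
      refine Finset.sum_congr rfl fun j' _ => ?_
      rw [Finset.prod_mul_distrib]
      ring
    rw [Finset.sum_congr rfl fun ε _ => step1 ε, Finset.sum_comm]
    have step2 : ∀ j' : κ → ι, ∑ ε : κ → ι → Bool, (∏ k, sg (ε k (j k)) * sg (ε k (j' k))) * a j'
        = (if j' = j then c ^ (Fintype.card κ) else 0) * a j' := by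
      intro j'
      rw [← Finset.sum_mul]
      congr 1
      have hps := Finset.prod_univ_sum (fun _ : κ => (univ : Finset (ι → Bool)))
        (fun k e => sg (e (j k)) * sg (e (j' k)))
      rw [Fintype.piFinset_univ] at hps
      rw [← hps]
      have inner : ∀ k : κ, (∑ e : ι → Bool, sg (e (j k)) * sg (e (j' k)))
          = if j k = j' k then c else 0 := fun k => sg_orth (j k) (j' k)
      rw [Finset.prod_congr rfl fun k _ => inner k]
      by_cases h : j' = j
      · subst h
        rw [if_pos rfl]
        rw [Finset.prod_congr rfl fun k _ => if_pos rfl]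
        simp [Finset.prod_const, Finset.card_univ]
      · rw [if_neg h]
        have : ∃ k, j k ≠ j' k := by
          by_contra hcon; push_neg at hcon; exact h (funext fun k => (hcon k).symm)
        obtain ⟨k, hk⟩ := this
        exact Finset.prod_eq_zero (Finset.mem_univ k) (if_neg hk)
    rw [Finset.sum_congr rfl fun j' _ => step2 j']
    simp only [ite_mul, zero_mul]
    rw [Finset.sum_ite_eq' univ j (fun j' => c ^ (Fintype.card κ) * a j')]
    simp
  have habs : |a j| * c ^ (Fintype.card κ)
      = |∑ ε : κ → ι → Bool, (∏ k, sg (ε k (j k))) * SS a ε| := by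
    rw [key, abs_mul, abs_of_nonneg (by positivity : (0:ℝ) ≤ c ^ (Fintype.card κ))]
    ring
  rw [habs]
  calc |∑ ε : κ → ι → Bool, (∏ k, sg (ε k (j k))) * SS a ε|
      ≤ ∑ ε : κ → ι → Bool, |(∏ k, sg (ε k (j k))) * SS a ε| :=
        Finset.abs_sum_le_sum_abs _ _
    _ = ∑ ε : κ → ι → Bool, |SS a ε| := by
        refine Finset.sum_congr rfl fun ε _ => ?_
        rw [abs_mul]
        have : |∏ k, sg (ε k (j k))| = 1 := by
          rw [Finset.abs_prod]
          rw [Finset.prod_congr rfl fun k _ => abs_sg (ε k (j k))]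
          simp
        rw [this, one_mul]

theorem mk_khinchin : ∀ (r : ℕ) (κ : Type) [DecidableEq κ] [Fintype κ],
    Fintype.card κ = r → ∀ (a : (κ → ι) → ℝ),
    Real.sqrt (∑ j : κ → ι, a j ^ 2) * ((2:ℝ) ^ (Fintype.card ι)) ^ r
      ≤ (Real.sqrt 2) ^ r * ∑ ε : κ → ι → Bool, |SS a ε| := by
  intro r
  induction r with
  | zero =>
    intro κ _ _ hcard a
    haveI : IsEmpty κ := Fintype.card_eq_zero_iff.mp hcard
    have huniq : ∀ j j' : κ → ι, j = j' := fun j j' => funext fun k => isEmptyElim k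
    have huniqb : ∀ j j' : κ → ι → Bool, j = j' := fun j j' => funext fun k => isEmptyElim k
    set j₀ : κ → ι := fun k => isEmptyElim k with hj₀
    set ε₀ : κ → ι → Bool := fun k => isEmptyElim k with hε₀
    rw [pow_zero, pow_zero, mul_one, one_mul]
    rw [Fintype.sum_eq_single j₀ (fun x hx => absurd (huniq x j₀) hx)]
    rw [Fintype.sum_eq_single ε₀ (fun x hx => absurd (huniqb x ε₀) hx)]
    have hSS : SS a ε₀ = a j₀ := by
      rw [SS_def]
      rw [Fintype.sum_eq_single j₀ (fun x hx => absurd (huniq x j₀) hx)]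
      rw [show (univ : Finset κ) = ∅ from Finset.univ_eq_empty, Finset.prod_empty, one_mul]
    rw [hSS, Real.sqrt_sq_eq_abs]
  | succ r ih =>
    intro κ _ _ hcard a
    have hpos : 0 < Fintype.card κ := by omega
    obtain ⟨k₀⟩ := Fintype.card_pos_iff.mp hpos
    set κ' := {k : κ // k ≠ k₀} with hκ'
    have hcard' : Fintype.card κ' = r := by
      have h1 : Fintype.card {k : κ // ¬ (k = k₀)} = Fintype.card κ - Fintype.card {k : κ // k = k₀} :=
        Fintype.card_subtype_compl _
      have h2 : Fintype.card {k : κ // k = k₀} = 1 := Fintype.card_subtype_eq k₀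
      show Fintype.card {k : κ // ¬ (k = k₀)} = r
      rw [h1, h2, hcard]
      omega
    set c : ℝ := (2:ℝ) ^ (Fintype.card ι) with hc
    have hc0 : (0:ℝ) ≤ c := by positivity
    set α : ℝ := Real.sqrt 2 with hα
    have hα0 : (0:ℝ) ≤ α := Real.sqrt_nonneg 2
    set b : ι → (κ' → ι → Bool) → ℝ :=
      fun v ε' => SS (fun g => a (glue k₀ v g)) ε' with hb
    -- decomposition of SS
    have hS : ∀ (ε₀ : ι → Bool) (ε' : κ' → ι → Bool),
        SS a (glue k₀ ε₀ ε') = ∑ v : ι, sg (ε₀ v) * b v ε' := by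
      intro ε₀ ε'
      rw [SS_def, sum_glue k₀ (fun j => (∏ k, sg (glue k₀ ε₀ ε' k (j k))) * a j)]
      refine Finset.sum_congr rfl fun v _ => ?_
      show _ = sg (ε₀ v) * ∑ g : κ' → ι, (∏ k : κ', sg (ε' k (g k))) * a (glue k₀ v g)
      rw [Finset.mul_sum]
      refine Finset.sum_congr rfl fun g _ => ?_
      have hprod : ∏ k : κ, sg (glue k₀ ε₀ ε' k ((glue k₀ v g) k))
          = sg (ε₀ v) * ∏ k : κ', sg (ε' k (g k)) := by
        rw [prod_split k₀]
        congr 1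
        · rw [glue_at, glue_at]
        · refine Finset.prod_congr rfl fun k _ => ?_
          rw [glue_ne, glue_ne]
      rw [hprod]; ring
    -- sum over ε decomposes
    have hsum : ∑ ε : κ → ι → Bool, |SS a ε|
        = ∑ ε' : κ' → ι → Bool, ∑ ε₀ : ι → Bool, |∑ v : ι, sg (ε₀ v) * b v ε'| := by
      rw [sum_glue k₀ (fun ε : κ → ι → Bool => |SS a ε|)]
      rw [Finset.sum_comm]
      exact Finset.sum_congr rfl fun ε' _ => Finset.sum_congr rfl fun ε₀ _ => by rw [hS]
    -- Q decomposition
    have hQ : ∑ j : κ → ι, a j ^ 2 = ∑ v : ι, ∑ g : κ' → ι, a (glue k₀ v g) ^ 2 :=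
      sum_glue k₀ _
    -- euclidean vectors
    set u : (κ' → ι → Bool) → EuclideanSpace ℝ ι := fun ε' => WithLp.toLp 2 (fun v => |b v ε'|) with hu
    have hunorm : ∀ ε', ‖u ε'‖ = Real.sqrt (∑ v : ι, (b v ε') ^ 2) := by
      intro ε'
      rw [EuclideanSpace.norm_eq]
      congr 1
      refine Finset.sum_congr rfl fun v _ => ?_
      rw [hu]
      show ‖|b v ε'|‖ ^ 2 = b v ε' ^ 2
      rw [Real.norm_eq_abs, abs_abs, sq_abs]
    -- step 2 : scalar khinchin for each ε'
    have hkh : ∀ ε', c * Real.sqrt (∑ v : ι, (b v ε') ^ 2)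
        ≤ α * ∑ ε₀ : ι → Bool, |∑ v : ι, sg (ε₀ v) * b v ε'| := by
      intro ε'
      have := khinchin_sqrt (fun v => b v ε')
      calc c * Real.sqrt (∑ v : ι, (b v ε') ^ 2)
          = Real.sqrt (∑ v : ι, (b v ε') ^ 2) * c := mul_comm _ _
        _ ≤ α * ∑ ε₀ : ι → Bool, |∑ v : ι, sg (ε₀ v) * b v ε'| := this
    -- Minkowski
    have hmink : Real.sqrt (∑ v : ι, (∑ ε' : κ' → ι → Bool, |b v ε'|) ^ 2)
        ≤ ∑ ε' : κ' → ι → Bool, Real.sqrt (∑ v : ι, (b v ε') ^ 2) := by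
      have h1 : ‖∑ ε' : κ' → ι → Bool, u ε'‖ ≤ ∑ ε' : κ' → ι → Bool, ‖u ε'‖ :=
        norm_sum_le _ _
      rw [Finset.sum_congr rfl fun ε' (_ : ε' ∈ univ) => hunorm ε'] at h1
      refine le_trans (le_of_eq ?_) h1
      rw [EuclideanSpace.norm_eq]
      congr 1
      refine Finset.sum_congr rfl fun v _ => ?_
      have h5 : (∑ ε' : κ' → ι → Bool, u ε') v = ∑ ε' : κ' → ι → Bool, |b v ε'| := by
        rw [WithLp.ofLp_sum, Finset.sum_apply]
      rw [h5, Real.norm_eq_abs, sq_abs]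
    -- IH for each v
    have hIH : ∀ v : ι, Real.sqrt (∑ g : κ' → ι, a (glue k₀ v g) ^ 2) * c ^ r
        ≤ α ^ r * ∑ ε' : κ' → ι → Bool, |b v ε'| := by
      intro v
      exact ih κ' hcard' (fun g => a (glue k₀ v g))
    -- assemble
    have main : c ^ (r+1) * Real.sqrt (∑ j : κ → ι, a j ^ 2)
        ≤ α ^ (r+1) * ∑ ε : κ → ι → Bool, |SS a ε| := by
      have e1 : α ^ (r+1) * ∑ ε : κ → ι → Bool, |SS a ε|
          = α ^ r * ∑ ε' : κ' → ι → Bool,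
              (α * ∑ ε₀ : ι → Bool, |∑ v : ι, sg (ε₀ v) * b v ε'|) := by
        rw [hsum, Finset.mul_sum, Finset.mul_sum]
        refine Finset.sum_congr rfl fun ε' _ => ?_
        rw [pow_succ]
        ring
      have e2 : α ^ r * ∑ ε' : κ' → ι → Bool,
            (α * ∑ ε₀ : ι → Bool, |∑ v : ι, sg (ε₀ v) * b v ε'|)
          ≥ α ^ r * ∑ ε' : κ' → ι → Bool, (c * Real.sqrt (∑ v : ι, (b v ε') ^ 2)) := by
        apply mul_le_mul_of_nonneg_left _ (pow_nonneg hα0 r)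
        exact Finset.sum_le_sum fun ε' _ => hkh ε'
      have e3 : α ^ r * ∑ ε' : κ' → ι → Bool, (c * Real.sqrt (∑ v : ι, (b v ε') ^ 2))
          ≥ c * Real.sqrt (∑ v : ι, ((α ^ r) * (∑ ε' : κ' → ι → Bool, |b v ε'|)) ^ 2) := by
        have h1 : ∑ ε' : κ' → ι → Bool, (c * Real.sqrt (∑ v : ι, (b v ε') ^ 2))
            = c * ∑ ε' : κ' → ι → Bool, Real.sqrt (∑ v : ι, (b v ε') ^ 2) := by
          rw [Finset.mul_sum]
        rw [h1, ← mul_assoc, mul_comm (α ^ r) c, mul_assoc]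
        apply mul_le_mul_of_nonneg_left _ hc0
        have h2 : Real.sqrt (∑ v : ι, ((α ^ r) * (∑ ε' : κ' → ι → Bool, |b v ε'|)) ^ 2)
            = α ^ r * Real.sqrt (∑ v : ι, (∑ ε' : κ' → ι → Bool, |b v ε'|) ^ 2) := by
          have : ∀ v : ι, ((α ^ r) * (∑ ε' : κ' → ι → Bool, |b v ε'|)) ^ 2
              = (α ^ r) ^ 2 * (∑ ε' : κ' → ι → Bool, |b v ε'|) ^ 2 := fun v => by ring
          rw [Finset.sum_congr rfl fun v _ => this v, ← Finset.mul_sum,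
            Real.sqrt_mul (by positivity), Real.sqrt_sq (by positivity)]
        rw [h2]
        exact mul_le_mul_of_nonneg_left hmink (by positivity)
      have e4 : c * Real.sqrt (∑ v : ι, ((α ^ r) * (∑ ε' : κ' → ι → Bool, |b v ε'|)) ^ 2)
          ≥ c * Real.sqrt (∑ v : ι, (Real.sqrt (∑ g : κ' → ι, a (glue k₀ v g) ^ 2) * c ^ r) ^ 2) := by
        apply mul_le_mul_of_nonneg_left _ hc0
        apply Real.sqrt_le_sqrt
        refine Finset.sum_le_sum fun v _ => ?_
        have hle := hIH v
        have h1 : (0:ℝ) ≤ Real.sqrt (∑ g : κ' → ι, a (glue k₀ v g) ^ 2) * c ^ r := by positivity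
        exact pow_le_pow_left₀ h1 hle 2
      have e5 : c * Real.sqrt (∑ v : ι, (Real.sqrt (∑ g : κ' → ι, a (glue k₀ v g) ^ 2) * c ^ r) ^ 2)
          = c ^ (r+1) * Real.sqrt (∑ j : κ → ι, a j ^ 2) := by
        have h1 : ∀ v : ι, (Real.sqrt (∑ g : κ' → ι, a (glue k₀ v g) ^ 2) * c ^ r) ^ 2
            = (c ^ r) ^ 2 * (∑ g : κ' → ι, a (glue k₀ v g) ^ 2) := by
          intro v
          rw [mul_pow, Real.sq_sqrt (Finset.sum_nonneg fun g _ => sq_nonneg _)]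
          ring
        rw [Finset.sum_congr rfl fun v _ => h1 v, ← Finset.mul_sum,
          Real.sqrt_mul (by positivity), Real.sqrt_sq (by positivity), ← hQ, pow_succ]
        ring
      calc c ^ (r+1) * Real.sqrt (∑ j : κ → ι, a j ^ 2)
          = c * Real.sqrt (∑ v : ι, (Real.sqrt (∑ g : κ' → ι, a (glue k₀ v g) ^ 2) * c ^ r) ^ 2) := e5.symm
        _ ≤ c * Real.sqrt (∑ v : ι, ((α ^ r) * (∑ ε' : κ' → ι → Bool, |b v ε'|)) ^ 2) := e4
        _ ≤ α ^ r * ∑ ε' : κ' → ι → Bool, (c * Real.sqrt (∑ v : ι, (b v ε') ^ 2)) := e3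
        _ ≤ α ^ r * ∑ ε' : κ' → ι → Bool,
              (α * ∑ ε₀ : ι → Bool, |∑ v : ι, sg (ε₀ v) * b v ε'|) := e2
        _ = α ^ (r+1) * ∑ ε : κ → ι → Bool, |SS a ε| := e1.symm
    calc Real.sqrt (∑ j : κ → ι, a j ^ 2) * c ^ (r+1)
        = c ^ (r+1) * Real.sqrt (∑ j : κ → ι, a j ^ 2) := mul_comm _ _
      _ ≤ α ^ (r+1) * ∑ ε : κ → ι → Bool, |SS a ε| := main

end KhAux
end



open KhAux

/-- Key step on `ℓ_∞`: if `s = 1/(1-θ)` with `1/2 ≤ θ < 1`, then for any `m`-linear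
form `T` on `ℓ_∞^n` and fixed coordinate `i`,
`∑_{jᵢ} (∑_{ĵᵢ} |T(e_{j₁},…,e_{j_m})|^s)^{1/s} ≤ 2^{(m-1)(1-θ)} ‖T‖`. -/
theorem ell_infty_mixed_sum_estimate (m : ℕ) (hm : 2 ≤ m) (n : ℕ)
    (θ : ℝ) (hθ1 : (1 : ℝ) / 2 ≤ θ) (hθ2 : θ < 1)
    (T : ContinuousMultilinearMap ℝ (fun _ : Fin m => (Fin n → ℝ)) ℝ)
    (i : Fin m) :
    ∑ j₀ : Fin n,
        (∑ j ∈ Finset.univ.filter (fun j : Fin m → Fin n => j i = j₀),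
            |T (fun k => Pi.single (j k) 1)| ^ (1 - θ)⁻¹) ^ (1 - θ)
      ≤ 2 ^ ((m - 1 : ℝ) * (1 - θ)) * ‖T‖ := by
  classical
  have hθ0 : (0:ℝ) < 1 - θ := by linarith
  rcases Nat.eq_zero_or_pos n with hn | hn
  · subst hn
    rw [show (univ : Finset (Fin 0)) = ∅ from Finset.univ_eq_empty, Finset.sum_empty]
    have h1 : (0:ℝ) < 2 ^ ((m - 1 : ℝ) * (1 - θ)) := Real.rpow_pos_of_pos (by norm_num) _
    exact mul_nonneg h1.le (norm_nonneg T)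
  -- notation
  set s : ℝ := (1 - θ)⁻¹ with hs
  have hs0 : 0 < s := inv_pos.mpr hθ0
  have hs2 : (2:ℝ) ≤ s := by
    rw [hs, show (2:ℝ) = ((2:ℝ)⁻¹)⁻¹ by norm_num]
    apply inv_anti₀ hθ0
    linarith
  have hr2 : ∀ x : ℝ, 0 ≤ x → x ^ (2:ℝ) = x ^ 2 := by
    intro x hx
    rw [show (2:ℝ) = ((2:ℕ):ℝ) by norm_num, Real.rpow_natCast]
  set e : Fin n → (Fin n → ℝ) := fun j => Pi.single j 1 with he
  set a : (Fin m → Fin n) → ℝ := fun j => T (fun k => e (j k)) with ha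
  set κ := {k : Fin m // k ≠ i} with hκ
  have hkm : Fintype.card κ = m - 1 := by
    have h1 : Fintype.card {k : Fin m // ¬ (k = i)}
        = Fintype.card (Fin m) - Fintype.card {k : Fin m // k = i} :=
      Fintype.card_subtype_compl _
    have h2 : Fintype.card {k : Fin m // k = i} = 1 := Fintype.card_subtype_eq i
    show Fintype.card {k : Fin m // ¬ (k = i)} = m - 1
    rw [h1, h2, Fintype.card_fin]
  -- sums over the filtered set are sums over hat-tuples
  have hbij : ∀ (j₀ : Fin n) (F : (Fin m → Fin n) → ℝ),
      ∑ j ∈ Finset.univ.filter (fun j : Fin m → Fin n => j i = j₀), F j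
        = ∑ jh : κ → Fin n, F (glue i j₀ jh) := by
    intro j₀ F
    refine Finset.sum_nbij' (fun r => (fun k : κ => r k.val)) (fun jh => glue i j₀ jh)
      ?_ ?_ ?_ ?_ ?_
    · intro r _; exact Finset.mem_univ _
    · intro jh _
      rw [Finset.mem_filter]
      exact ⟨Finset.mem_univ _, glue_at i j₀ jh⟩
    · intro r hr
      rw [Finset.mem_filter] at hr
      funext k
      by_cases h : k = i
      · subst h; rw [glue_at]; exact hr.2.symm
      · exact glue_ne i j₀ _ (⟨k, h⟩ : κ)
    · intro jh _
      funext k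
      exact glue_ne i j₀ jh k
    · intro r hr
      rw [Finset.mem_filter] at hr
      congr 1
      funext k
      by_cases h : k = i
      · subst h; rw [glue_at, hr.2]
      · exact (glue_ne i j₀ (fun k' : κ => r k'.val) (⟨k, h⟩ : κ)).symm
  -- basis expansion helper
  have hvec : ∀ c : Fin n → ℝ, (∑ j : Fin n, c j • e j) = c := by
    intro c
    funext t
    rw [Finset.sum_apply]
    have h1 : ∀ j, (c j • e j) t = if t = j then c j else 0 := by
      intro j
      rw [Pi.smul_apply, he]
      simp only [Pi.single_apply, smul_eq_mul]
      by_cases h : t = j <;> simp [h]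
    rw [Finset.sum_congr rfl fun j _ => h1 j, Finset.sum_ite_eq univ t c,
      if_pos (Finset.mem_univ t)]
  -- the sign-vector arguments
  set xv : (κ → Fin n → Bool) → Fin n → (Fin m → Fin n → ℝ) :=
    fun ε j₀ => glue i (e j₀) (fun k => fun t => sg (ε k t)) with hxv
  set a' : Fin n → ((κ → Fin n) → ℝ) := fun j₀ jh => a (glue i j₀ jh) with ha'
  -- expansion of T at sign vectors
  have hTx : ∀ (ε : κ → Fin n → Bool) (j₀ : Fin n), T (xv ε j₀) = SS (a' j₀) ε := by
    intro ε j₀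
    set C : Fin m → Fin n → ℝ :=
      glue i (fun j => if j = j₀ then (1:ℝ) else 0) (fun k => fun j => sg (ε k j)) with hC
    have hxC : ∀ k, xv ε j₀ k = C k := by
      intro k
      by_cases h : k = i
      · subst h
        rw [hxv, hC]
        show glue k (e j₀) _ k = glue k (fun j => if j = j₀ then (1:ℝ) else 0) _ k
        rw [glue_at, glue_at, he]
        funext t
        simp [Pi.single_apply]
      · rw [hxv, hC]
        show glue i (e j₀) (fun k t => sg (ε k t)) ((⟨k, h⟩ : κ)).val
          = glue i (fun j => if j = j₀ then (1:ℝ) else 0) (fun k j => sg (ε k j)) ((⟨k, h⟩ : κ)).val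
        rw [glue_ne, glue_ne]
    have step1 : T (xv ε j₀) = T (fun k => ∑ j : Fin n, C k j • e j) := by
      congr 1
      funext k
      rw [hxC k, hvec (C k)]
    have step2 : T (fun k => ∑ j : Fin n, C k j • e j)
        = ∑ r : Fin m → Fin n, (∏ k, C k (r k)) * a r := by
      rw [ContinuousMultilinearMap.map_sum T (g := fun k j => C k j • e j)]
      refine Finset.sum_congr rfl fun r _ => ?_
      have h3 := ContinuousMultilinearMap.map_smul_univ T (fun k => C k (r k)) (fun k => e (r k))
      rw [h3, smul_eq_mul, ha]
    have step3 : ∀ r : Fin m → Fin n,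
        (∏ k, C k (r k)) = (if r i = j₀ then 1 else 0) * ∏ k : κ, sg (ε k (r k.val)) := by
      intro r
      rw [prod_split i (fun k => C k (r k))]
      congr 1
      · rw [hC]; exact congrFun (glue_at i _ _) (r i)
      · refine Finset.prod_congr rfl fun k _ => ?_
        rw [hC]
        exact congrFun (glue_ne i _ _ k) (r k.val)
    have step4 : ∑ r : Fin m → Fin n,
        ((if r i = j₀ then (1:ℝ) else 0) * ∏ k : κ, sg (ε k (r k.val))) * a r
        = ∑ r ∈ Finset.univ.filter (fun r : Fin m → Fin n => r i = j₀),
            (∏ k : κ, sg (ε k (r k.val))) * a r := by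
      rw [Finset.sum_filter]
      refine Finset.sum_congr rfl fun r _ => ?_
      by_cases h : r i = j₀ <;> simp [h]
    rw [step1, step2, Finset.sum_congr rfl fun r _ => by rw [step3 r]]
    rw [step4, hbij j₀ (fun r => (∏ k : κ, sg (ε k (r k.val))) * a r), SS_def]
    refine Finset.sum_congr rfl fun jh _ => ?_
    congr 1
    refine Finset.prod_congr rfl fun k _ => ?_
    rw [glue_ne]
  -- norm bounds
  have hn1 : ∀ (v : Fin n → ℝ), (∀ t, |v t| ≤ 1) → ‖v‖ ≤ 1 := by
    intro v hv
    rw [pi_norm_le_iff_of_nonneg zero_le_one]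
    intro t
    rw [Real.norm_eq_abs]
    exact hv t
  have hTle : ∀ (x : Fin m → (Fin n → ℝ)), (∀ k, ‖x k‖ ≤ 1) → |T x| ≤ ‖T‖ := by
    intro x hx
    calc |T x| = ‖T x‖ := (Real.norm_eq_abs _).symm
      _ ≤ ‖T‖ * ∏ k, ‖x k‖ := T.le_opNorm x
      _ ≤ ‖T‖ * 1 := by
          apply mul_le_mul_of_nonneg_left _ (norm_nonneg T)
          exact Finset.prod_le_one (fun k _ => norm_nonneg _) (fun k _ => hx k)
      _ = ‖T‖ := mul_one _
  have hone : ∀ (j₀ : Fin n) (t : Fin n), |e j₀ t| ≤ 1 := by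
    intro j₀ t
    rw [he]
    simp only [Pi.single_apply]
    by_cases ht : t = j₀ <;> simp [ht]
  -- column sums bounded by the norm
  have hCsum : ∀ ε : κ → Fin n → Bool, ∑ j₀ : Fin n, |T (xv ε j₀)| ≤ ‖T‖ := by
    intro ε
    set d : Fin n → ℝ := fun j₀ => if 0 ≤ T (xv ε j₀) then 1 else -1 with hd
    set xb : Fin m → (Fin n → ℝ) := glue i 0 (fun k => fun t => sg (ε k t)) with hxb
    have hup : ∀ j₀, xv ε j₀ = Function.update xb i (e j₀) := by
      intro j₀
      funext k
      by_cases h : k = i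
      · subst h
        rw [Function.update_self, hxv]
        exact glue_at _ _ _
      · rw [Function.update_of_ne h, hxv, hxb]
        show glue i (e j₀) (fun k t => sg (ε k t)) ((⟨k, h⟩ : κ)).val
            = glue i 0 (fun k t => sg (ε k t)) ((⟨k, h⟩ : κ)).val
        rw [glue_ne, glue_ne]
    have habs : ∀ j₀, |T (xv ε j₀)| = d j₀ * T (xv ε j₀) := by
      intro j₀
      show |T (xv ε j₀)| = (if 0 ≤ T (xv ε j₀) then (1:ℝ) else -1) * T (xv ε j₀)
      by_cases h : 0 ≤ T (xv ε j₀)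
      · rw [if_pos h, one_mul, abs_of_nonneg h]
      · rw [if_neg h, abs_of_neg (lt_of_not_ge h)]; ring
    have hsmul : ∀ j₀ : Fin n, d j₀ * T (Function.update xb i (e j₀))
        = T (Function.update xb i (d j₀ • e j₀)) := by
      intro j₀
      rw [T.map_update_smul xb i (d j₀) (e j₀), smul_eq_mul]
    have hfin : ∑ j₀ : Fin n, T (Function.update xb i (d j₀ • e j₀))
        = T (Function.update xb i d) := by
      have h4 : T.toMultilinearMap (Function.update xb i (∑ j₀ : Fin n, d j₀ • e j₀))
          = ∑ j₀ : Fin n, T.toMultilinearMap (Function.update xb i (d j₀ • e j₀)) :=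
        T.toMultilinearMap.map_update_sum univ i (fun j₀ : Fin n => d j₀ • e j₀) xb
      have h5 : ∑ j₀ : Fin n, T (Function.update xb i (d j₀ • e j₀))
          = T (Function.update xb i (∑ j₀ : Fin n, d j₀ • e j₀)) := h4.symm
      rw [h5, hvec d]
    have hdone : |T (Function.update xb i d)| ≤ ‖T‖ := by
      apply hTle
      intro k
      apply hn1
      intro t
      by_cases h : k = i
      · subst h
        rw [Function.update_self, hd]
        by_cases h2 : 0 ≤ T (xv ε t) <;> simp [h2]
      · rw [Function.update_of_ne h, hxb]
        show |glue i 0 (fun k t => sg (ε k t)) ((⟨k, h⟩ : κ)).val t| ≤ 1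
        rw [glue_ne, abs_sg]
    calc ∑ j₀ : Fin n, |T (xv ε j₀)|
        = ∑ j₀ : Fin n, T (Function.update xb i (d j₀ • e j₀)) := by
          refine Finset.sum_congr rfl fun j₀ _ => ?_
          rw [habs j₀, hup j₀, hsmul j₀]
      _ = T (Function.update xb i d) := hfin
      _ ≤ |T (Function.update xb i d)| := le_abs_self _
      _ ≤ ‖T‖ := hdone
  -- quantities
  set q : ℝ := ((2:ℝ)^n)^(m-1) with hq
  have hq0 : (0:ℝ) < q := by positivity
  set A : Fin n → ℝ := fun j₀ => ∑ ε : κ → Fin n → Bool, |SS (a' j₀) ε| with hA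
  have hA0 : ∀ j₀, 0 ≤ A j₀ := fun j₀ => Finset.sum_nonneg (fun _ _ => abs_nonneg _)
  set E : Fin n → ℝ := fun j₀ => A j₀ / q with hE
  have hE0 : ∀ j₀, 0 ≤ E j₀ := fun j₀ => div_nonneg (hA0 _) hq0.le
  have hcards : ((2:ℝ) ^ Fintype.card (Fin n)) ^ (Fintype.card κ) = q := by
    rw [Fintype.card_fin, hkm, hq]
  -- max bound
  have F1 : ∀ (j₀ : Fin n) (jh : κ → Fin n), |a' j₀ jh| ≤ E j₀ := by
    intro j₀ jh
    have h := max_bound (a' j₀) jh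
    rw [hcards] at h
    rw [hE, le_div_iff₀ hq0]
    exact h
  -- multiple Khinchin
  have F2 : ∀ j₀ : Fin n, Real.sqrt (∑ jh : κ → Fin n, a' j₀ jh ^ 2)
      ≤ (Real.sqrt 2)^(m-1) * E j₀ := by
    intro j₀
    have h := mk_khinchin (m-1) κ hkm (a' j₀)
    rw [Fintype.card_fin] at h
    show Real.sqrt (∑ jh : κ → Fin n, a' j₀ jh ^ 2) ≤ (Real.sqrt 2)^(m-1) * (A j₀ / q)
    rw [mul_div_assoc', le_div_iff₀ hq0]
    exact h
  -- key estimate for each j₀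
  have key : ∀ j₀ : Fin n, (∑ jh : κ → Fin n, |a' j₀ jh| ^ s) ^ (1-θ)
      ≤ 2 ^ ((m - 1 : ℝ) * (1 - θ)) * E j₀ := by
    intro j₀
    have hP1 : ∀ jh : κ → Fin n, |a' j₀ jh| ^ s ≤ a' j₀ jh ^ 2 * E j₀ ^ (s - 2) := by
      intro jh
      have hc0 : (0:ℝ) ≤ |a' j₀ jh| := abs_nonneg _
      have hexp : (2:ℝ) + (s - 2) = s := by ring
      calc |a' j₀ jh| ^ s = |a' j₀ jh| ^ ((2:ℝ) + (s - 2)) := by rw [hexp]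
        _ = |a' j₀ jh| ^ (2:ℝ) * |a' j₀ jh| ^ (s - 2) :=
            Real.rpow_add' hc0 (by rw [hexp]; exact ne_of_gt hs0)
        _ ≤ |a' j₀ jh| ^ (2:ℝ) * E j₀ ^ (s - 2) := by
            apply mul_le_mul_of_nonneg_left _ (Real.rpow_nonneg hc0 2)
            exact Real.rpow_le_rpow hc0 (F1 j₀ jh) (by linarith)
        _ = a' j₀ jh ^ 2 * E j₀ ^ (s - 2) := by rw [hr2 _ hc0, sq_abs]
    have hQle : (∑ jh : κ → Fin n, a' j₀ jh ^ 2) ≤ 2^(m-1) * E j₀ ^ 2 := by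
      have hQ0 : (0:ℝ) ≤ ∑ jh : κ → Fin n, a' j₀ jh ^ 2 :=
        Finset.sum_nonneg fun _ _ => sq_nonneg _
      calc ∑ jh : κ → Fin n, a' j₀ jh ^ 2
          = Real.sqrt (∑ jh : κ → Fin n, a' j₀ jh ^ 2) ^ 2 := (Real.sq_sqrt hQ0).symm
        _ ≤ ((Real.sqrt 2)^(m-1) * E j₀) ^ 2 :=
            pow_le_pow_left₀ (Real.sqrt_nonneg _) (F2 j₀) 2
        _ = 2^(m-1) * E j₀ ^ 2 := by
            rw [mul_pow, ← pow_mul, Nat.mul_comm, pow_mul, Real.sq_sqrt (by norm_num : (0:ℝ) ≤ 2)]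
    have hPle : ∑ jh : κ → Fin n, |a' j₀ jh| ^ s ≤ 2^(m-1) * E j₀ ^ s := by
      have hexp : (2:ℝ) + (s - 2) = s := by ring
      calc ∑ jh : κ → Fin n, |a' j₀ jh| ^ s
          ≤ ∑ jh : κ → Fin n, a' j₀ jh ^ 2 * E j₀ ^ (s - 2) :=
            Finset.sum_le_sum fun jh _ => hP1 jh
        _ = (∑ jh : κ → Fin n, a' j₀ jh ^ 2) * E j₀ ^ (s - 2) := by rw [Finset.sum_mul]
        _ ≤ (2^(m-1) * E j₀ ^ 2) * E j₀ ^ (s - 2) := by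
            apply mul_le_mul_of_nonneg_right hQle (Real.rpow_nonneg (hE0 j₀) _)
        _ = 2^(m-1) * (E j₀ ^ (2:ℝ) * E j₀ ^ (s - 2)) := by
            rw [hr2 _ (hE0 j₀)]; ring
        _ = 2^(m-1) * E j₀ ^ s := by
            rw [← Real.rpow_add' (hE0 j₀) (by rw [hexp]; exact ne_of_gt hs0), hexp]
    have hsum0 : (0:ℝ) ≤ ∑ jh : κ → Fin n, |a' j₀ jh| ^ s :=
      Finset.sum_nonneg fun jh _ => Real.rpow_nonneg (abs_nonneg _) _
    calc (∑ jh : κ → Fin n, |a' j₀ jh| ^ s) ^ (1-θ)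
        ≤ (2^(m-1) * E j₀ ^ s) ^ (1-θ) := Real.rpow_le_rpow hsum0 hPle hθ0.le
      _ = ((2:ℝ)^(m-1)) ^ (1-θ) * (E j₀ ^ s) ^ (1-θ) :=
          Real.mul_rpow (by positivity) (Real.rpow_nonneg (hE0 j₀) s)
      _ = 2 ^ ((m - 1 : ℝ) * (1 - θ)) * E j₀ := by
          congr 1
          · rw [← Real.rpow_natCast (2:ℝ) (m-1), ← Real.rpow_mul (by norm_num : (0:ℝ) ≤ 2)]
            congr 2
            rw [Nat.cast_sub (by omega : 1 ≤ m), Nat.cast_one]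
          · rw [← Real.rpow_mul (hE0 j₀), hs, inv_mul_cancel₀ (ne_of_gt hθ0), Real.rpow_one]
  -- sum of the averages is at most the norm
  have hEsum : ∑ j₀ : Fin n, E j₀ ≤ ‖T‖ := by
    have hAsum : ∑ j₀ : Fin n, A j₀ ≤ q * ‖T‖ := by
      have h1 : ∑ j₀ : Fin n, A j₀
          = ∑ ε : κ → Fin n → Bool, ∑ j₀ : Fin n, |T (xv ε j₀)| := by
        rw [hA]
        rw [Finset.sum_comm]
        exact Finset.sum_congr rfl fun ε _ => Finset.sum_congr rfl fun j₀ _ => by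
          rw [hTx ε j₀]
      have hcard2 : (Fintype.card (κ → Fin n → Bool) : ℝ) = q := by
        rw [Fintype.card_fun, Fintype.card_fun, Fintype.card_bool, Fintype.card_fin, hkm, hq]
        push_cast
        rfl
      calc ∑ j₀ : Fin n, A j₀
          = ∑ ε : κ → Fin n → Bool, ∑ j₀ : Fin n, |T (xv ε j₀)| := h1
        _ ≤ ∑ _ε : κ → Fin n → Bool, ‖T‖ := Finset.sum_le_sum fun ε _ => hCsum ε
        _ = (Fintype.card (κ → Fin n → Bool) : ℝ) * ‖T‖ := by
            rw [Finset.sum_const, Finset.card_univ, nsmul_eq_mul]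
        _ = q * ‖T‖ := by rw [hcard2]
    rw [hE]
    rw [← Finset.sum_div, div_le_iff₀ hq0]
    calc ∑ j₀ : Fin n, A j₀ ≤ q * ‖T‖ := hAsum
      _ = ‖T‖ * q := mul_comm _ _
  -- final assembly
  have hinner : ∀ j₀ : Fin n,
      (∑ j ∈ Finset.univ.filter (fun j : Fin m → Fin n => j i = j₀),
        |T (fun k => Pi.single (j k) 1)| ^ (1 - θ)⁻¹)
      = ∑ jh : κ → Fin n, |a' j₀ jh| ^ s := by
    intro j₀
    rw [hbij j₀ (fun j => |T (fun k => Pi.single (j k) 1)| ^ (1 - θ)⁻¹)]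
  calc ∑ j₀ : Fin n,
        (∑ j ∈ Finset.univ.filter (fun j : Fin m → Fin n => j i = j₀),
            |T (fun k => Pi.single (j k) 1)| ^ (1 - θ)⁻¹) ^ (1 - θ)
      = ∑ j₀ : Fin n, (∑ jh : κ → Fin n, |a' j₀ jh| ^ s) ^ (1-θ) :=
        Finset.sum_congr rfl fun j₀ _ => congrArg (· ^ (1-θ)) (hinner j₀)
    _ ≤ ∑ j₀ : Fin n, 2 ^ ((m - 1 : ℝ) * (1 - θ)) * E j₀ :=
        Finset.sum_le_sum fun j₀ _ => key j₀
    _ = 2 ^ ((m - 1 : ℝ) * (1 - θ)) * ∑ j₀ : Fin n, E j₀ := by rw [Finset.mul_sum]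
    _ ≤ 2 ^ ((m - 1 : ℝ) * (1 - θ)) * ‖T‖ := by
        apply mul_le_mul_of_nonneg_left hEsum
        exact (Real.rpow_pos_of_pos (by norm_num) _).le
end

section
/- Littlewood's 4/3 inequality: for every bilinear form T : ℓ_∞^n × ℓ_∞^n → ℝ, (∑_{j,k=1}^n |T(e_j,e_k)|^{4/3})^{3/4} ≤ √2 · ‖T‖. -/
/-!
Szarek's sharp Khintchine inequality `‖v‖₂ ≤ √2 · 𝔼|∑ σᵢ vᵢ|` is proved by Fourier analysis on the
cube `{±1}ⁿ`. For `f = |∑ σᵢ vᵢ|` and the noise operator `N_ρ`, linearity of the Rademacher sum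
gives `⟨f, N_ρ f⟩ ≥ ρ ‖f‖₂²`, while on the Fourier side `⟨f, N_ρ f⟩ = ∑ ρ^|A| f̂(A)²`, where
`f̂(∅) = 𝔼 f`, the coefficients of degree one vanish because `f` is even, and the remaining ones
contribute at most `ρ² (‖f‖₂² - f̂(∅)²)`. Letting `ρ → 1` gives `‖f‖₂² ≤ 2 (𝔼 f)²`.

Applied to the rows of the matrix `T(e_j, e_k)` and averaged over sign vectors, this bounds
`∑_j ‖(T(e_j, e_k))_k‖₂` by `√2 ‖T‖`, and the same holds for columns. Hölder's and Minkowski's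
inequalities bound the `ℓ_{4/3}` sum by the product of these two mixed norms to the power `2/3`.
-/

open Finset

lemma Int.sum_units {M : Type*} [AddCommMonoid M] (f : ℤˣ → M) : ∑ u, f u = f 1 + f (-1) := by
  rw [show (univ : Finset ℤˣ) = {1, -1} from rfl, sum_pair (by decide)]

lemma Int.units_cast_mul_self (u : ℤˣ) : ((u : ℤ) : ℝ) * u = 1 := by
  rcases Int.units_eq_one_or u with rfl | rfl <;> norm_num

lemma Int.abs_units_cast (u : ℤˣ) : |((u : ℤ) : ℝ)| = 1 := by
  rcases Int.units_eq_one_or u with rfl | rfl <;> simp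

section BooleanCube

variable {ι : Type*}

def walsh (A : Finset ι) (σ : ι → ℤˣ) : ℝ := ∏ i ∈ A, ((σ i : ℤ) : ℝ)

lemma walsh_mul (A : Finset ι) (σ τ : ι → ℤˣ) : walsh A (σ * τ) = walsh A σ * walsh A τ := by
  simp [walsh, prod_mul_distrib]

lemma walsh_inv (A : Finset ι) (σ : ι → ℤˣ) : walsh A σ⁻¹ = walsh A σ := by
  simp [walsh, Int.units_inv_eq_self]

lemma walsh_neg (A : Finset ι) (σ : ι → ℤˣ) : walsh A (-σ) = (-1) ^ #A * walsh A σ := by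
  simp [walsh, prod_neg]

variable [Fintype ι]

-- The law of a `ρ`-correlated sign vector: independent coordinates of mean `ρ`.
noncomputable def noiseKernel (ρ : ℝ) (η : ι → ℤˣ) : ℝ := ∏ i, (1 + ρ * η i) / 2

lemma noiseKernel_nonneg {ρ : ℝ} (hρ : |ρ| ≤ 1) (η : ι → ℤˣ) : 0 ≤ noiseKernel ρ η := by
  refine prod_nonneg fun i _ => ?_
  rcases Int.units_eq_one_or (η i) with h | h <;>
    · simp only [h]; norm_num; linarith [abs_le.mp hρ]

lemma noiseKernel_one (η : ι → ℤˣ) : noiseKernel 1 η = if η = 1 then 1 else 0 := by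
  split_ifs with h
  · simp [noiseKernel, h]
  · obtain ⟨i, hi⟩ := Function.ne_iff.mp h
    refine prod_eq_zero (mem_univ i) ?_
    rcases Int.units_eq_one_or (η i) with h' | h'
    · exact absurd h' hi
    · simp [h']

def rademacherSum (v : ι → ℝ) (σ : ι → ℤˣ) : ℝ := ∑ i, v i * σ i

lemma rademacherSum_neg (v : ι → ℝ) (σ : ι → ℤˣ) : rademacherSum v (-σ) = -rademacherSum v σ := by
  simp [rademacherSum, sum_neg_distrib]

variable [DecidableEq ι]

lemma sum_signs_prod (g : ι → ℤˣ → ℝ) :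
    ∑ σ : ι → ℤˣ, ∏ i, g i (σ i) = ∏ i, (g i 1 + g i (-1)) := by
  simp only [← Int.sum_units, Fintype.prod_sum]

lemma sum_signs_const (c : ℝ) : ∑ _σ : ι → ℤˣ, c = 2 ^ Fintype.card ι * c := by
  simp

-- `2 ^ card ι` times the Fourier–Walsh coefficient `f̂(A)`.
def walshCoeff (f : (ι → ℤˣ) → ℝ) (A : Finset ι) : ℝ := ∑ σ, f σ * walsh A σ

lemma walshCoeff_empty (f : (ι → ℤˣ) → ℝ) : walshCoeff f ∅ = ∑ σ, f σ := by
  simp [walshCoeff, walsh]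

lemma walshCoeff_eq_zero_of_odd {f : (ι → ℤˣ) → ℝ} (hf : ∀ σ, f (-σ) = f σ) {A : Finset ι}
    (hA : Odd #A) : walshCoeff f A = 0 := by
  have h : walshCoeff f A = -walshCoeff f A := by
    calc walshCoeff f A = ∑ σ, f (-σ) * walsh A (-σ) :=
          (Equiv.sum_comp (Equiv.neg (ι → ℤˣ)) (fun σ => f σ * walsh A σ)).symm
      _ = -walshCoeff f A := by simp [walshCoeff, hf, walsh_neg, hA.neg_one_pow]
  linarith

lemma sum_noiseKernel_mul_apply (ρ : ℝ) (i : ι) :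
    ∑ η : ι → ℤˣ, noiseKernel ρ η * ((η i : ℤ) : ℝ) = ρ := by
  let g : ι → ℤˣ → ℝ := fun j u => (1 + ρ * u) / 2 * if j = i then ((u : ℤ) : ℝ) else 1
  have h (η : ι → ℤˣ) : noiseKernel ρ η * ((η i : ℤ) : ℝ) = ∏ j, g j (η j) := by
    rw [prod_mul_distrib, prod_ite_eq' univ i, if_pos (mem_univ i), noiseKernel]
  rw [sum_congr rfl fun η _ => h η, sum_signs_prod, prod_eq_single i]
  · simp [g]; ring
  · intro j _ hj
    simp [g, hj]; ring
  · simp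

lemma two_pow_mul_noiseKernel (ρ : ℝ) (η : ι → ℤˣ) :
    2 ^ Fintype.card ι * noiseKernel ρ η = ∑ A : Finset ι, ρ ^ #A * walsh A η := by
  have h : ∀ i, 2 * ((1 + ρ * η i) / 2) = ρ * η i + 1 := fun i => by ring
  rw [noiseKernel, ← card_univ, ← prod_const, ← prod_mul_distrib]
  simp only [h, Fintype.prod_add, prod_const_one, mul_one, prod_mul_distrib, prod_const, walsh]

lemma sum_noiseKernel_mul_eq_sum_walshCoeff_sq (f : (ι → ℤˣ) → ℝ) (ρ : ℝ) :
    2 ^ Fintype.card ι * ∑ σ, ∑ η, noiseKernel ρ η * (f σ * f (σ * η))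
      = ∑ A : Finset ι, ρ ^ #A * walshCoeff f A ^ 2 := by
  have hshift (σ : ι → ℤˣ) : ∑ η, noiseKernel ρ η * (f σ * f (σ * η))
      = ∑ τ, noiseKernel ρ (σ⁻¹ * τ) * (f σ * f τ) := by
    rw [← Equiv.sum_comp (Equiv.mulLeft σ⁻¹)]
    simp
  have hkernel (σ τ : ι → ℤˣ) : 2 ^ Fintype.card ι * noiseKernel ρ (σ⁻¹ * τ)
      = ∑ A : Finset ι, ρ ^ #A * walsh A σ * walsh A τ := by
    simp only [two_pow_mul_noiseKernel, walsh_mul, walsh_inv, mul_assoc]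
  calc 2 ^ Fintype.card ι * ∑ σ, ∑ η, noiseKernel ρ η * (f σ * f (σ * η))
      = ∑ σ, ∑ τ, ∑ A : Finset ι, ρ ^ #A * ((f σ * walsh A σ) * (f τ * walsh A τ)) := by
        simp_rw [hshift, mul_sum, ← mul_assoc, hkernel, sum_mul]
        refine sum_congr rfl fun σ _ => sum_congr rfl fun τ _ => sum_congr rfl fun A _ => ?_
        ring
    _ = ∑ A : Finset ι, ∑ σ, ∑ τ, ρ ^ #A * ((f σ * walsh A σ) * (f τ * walsh A τ)) := by
        rw [sum_congr rfl fun σ _ => sum_comm]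
        exact sum_comm
    _ = ∑ A : Finset ι, ρ ^ #A * walshCoeff f A ^ 2 := by
        simp only [walshCoeff, sq, sum_mul_sum]
        simp only [mul_sum]

lemma sum_walshCoeff_sq (f : (ι → ℤˣ) → ℝ) :
    ∑ A : Finset ι, walshCoeff f A ^ 2 = 2 ^ Fintype.card ι * ∑ σ, f σ ^ 2 := by
  have h := sum_noiseKernel_mul_eq_sum_walshCoeff_sq f 1
  simp only [noiseKernel_one, ite_mul, one_mul, zero_mul, sum_ite_eq', mem_univ, if_true,
    mul_one, one_pow] at h
  simp [h, sq]

lemma sum_pow_card_mul_walshCoeff_sq_le {f : (ι → ℤˣ) → ℝ} (hf : ∀ σ, f (-σ) = f σ) {ρ : ℝ}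
    (h0 : 0 ≤ ρ) (h1 : ρ ≤ 1) :
    ∑ A : Finset ι, ρ ^ #A * walshCoeff f A ^ 2
      ≤ (1 - ρ ^ 2) * walshCoeff f ∅ ^ 2 + ρ ^ 2 * ∑ A : Finset ι, walshCoeff f A ^ 2 := by
  have hA (A : Finset ι) (hA : A ≠ ∅) :
      ρ ^ #A * walshCoeff f A ^ 2 ≤ ρ ^ 2 * walshCoeff f A ^ 2 := by
    rcases Nat.lt_or_ge #A 2 with hlt | hge
    · have : #A = 1 := by have := card_pos.mpr (nonempty_iff_ne_empty.mpr hA); omega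
      simp [walshCoeff_eq_zero_of_odd hf (this ▸ odd_one)]
    · exact mul_le_mul_of_nonneg_right (pow_le_pow_of_le_one h0 h1 hge) (sq_nonneg _)
  rw [← add_sum_erase _ _ (mem_univ ∅), ← add_sum_erase _ _ (mem_univ ∅), mul_add, card_empty,
    pow_zero, one_mul, mul_sum]
  have := sum_le_sum (s := univ.erase ∅) fun A hA' => hA A (ne_of_mem_erase hA')
  linarith

lemma sum_noiseKernel_mul_rademacherSum (v : ι → ℝ) (ρ : ℝ) (σ : ι → ℤˣ) :
    ∑ η, noiseKernel ρ η * rademacherSum v (σ * η) = ρ * rademacherSum v σ := by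
  simp only [rademacherSum, mul_sum, Pi.mul_apply, Units.val_mul, Int.cast_mul]
  rw [sum_comm]
  refine sum_congr rfl fun i _ => ?_
  calc _ = (∑ η : ι → ℤˣ, noiseKernel ρ η * ((η i : ℤ) : ℝ)) * (v i * σ i) := by
        rw [sum_mul]
        exact sum_congr rfl fun η _ => by ring
    _ = _ := by rw [sum_noiseKernel_mul_apply]

lemma sum_signs_apply_mul_apply (i j : ι) :
    ∑ σ : ι → ℤˣ, ((σ i : ℤ) : ℝ) * σ j = if i = j then 2 ^ Fintype.card ι else 0 := by
  split_ifs with h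
  · simp [h, Int.units_cast_mul_self]
  · let δ : ι → ℤˣ := Pi.mulSingle i (-1)
    have hflip (σ : ι → ℤˣ) :
        ((((δ * σ) i : ℤˣ) : ℤ) : ℝ) * ((δ * σ) j : ℤˣ) = -(((σ i : ℤ) : ℝ) * σ j) := by
      simp [δ, Pi.mulSingle_eq_of_ne' h]
    have := Equiv.sum_comp (Equiv.mulLeft δ) (fun σ => ((σ i : ℤ) : ℝ) * σ j)
    simp only [Equiv.coe_mulLeft, hflip, sum_neg_distrib] at this
    linarith

lemma sum_rademacherSum_sq (v : ι → ℝ) :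
    ∑ σ, rademacherSum v σ ^ 2 = 2 ^ Fintype.card ι * ∑ i, v i ^ 2 := by
  calc ∑ σ, rademacherSum v σ ^ 2
      = ∑ i, ∑ j, v i * v j * ∑ σ : ι → ℤˣ, ((σ i : ℤ) : ℝ) * σ j := by
        simp only [rademacherSum, sq, sum_mul_sum]
        simp only [mul_sum]
        rw [sum_comm]
        refine sum_congr rfl fun i _ => ?_
        rw [sum_comm]
        exact sum_congr rfl fun j _ => sum_congr rfl fun σ _ => by ring
    _ = 2 ^ Fintype.card ι * ∑ i, v i ^ 2 := by
        simp [sum_signs_apply_mul_apply, mul_sum, sq, mul_comm]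

lemma mul_sum_rademacherSum_sq_le (v : ι → ℝ) {ρ : ℝ} (h0 : 0 ≤ ρ) (h1 : ρ ≤ 1) :
    ρ * ∑ σ, rademacherSum v σ ^ 2
      ≤ ∑ σ, ∑ η, noiseKernel ρ η * (|rademacherSum v σ| * |rademacherSum v (σ * η)|) := by
  rw [mul_sum]
  refine sum_le_sum fun σ _ => ?_
  calc ρ * rademacherSum v σ ^ 2
      = |rademacherSum v σ| * |∑ η, noiseKernel ρ η * rademacherSum v (σ * η)| := by
        rw [sum_noiseKernel_mul_rademacherSum, abs_mul, abs_of_nonneg h0, ← sq_abs]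
        ring
    _ ≤ |rademacherSum v σ| * ∑ η, |noiseKernel ρ η * rademacherSum v (σ * η)| :=
        mul_le_mul_of_nonneg_left (abs_sum_le_sum_abs _ _) (abs_nonneg _)
    _ = ∑ η, noiseKernel ρ η * (|rademacherSum v σ| * |rademacherSum v (σ * η)|) := by
        rw [mul_sum]
        refine sum_congr rfl fun η _ => ?_
        rw [abs_mul, abs_of_nonneg (noiseKernel_nonneg (abs_le.mpr ⟨by linarith, h1⟩) η)]
        ring

lemma le_two_mul_of_forall_mul_le {M b : ℝ} (hb : 0 ≤ b)
    (h : ∀ ρ : ℝ, 0 ≤ ρ → ρ < 1 → ρ * M ≤ (1 - ρ ^ 2) * b + ρ ^ 2 * M) : M ≤ 2 * b := by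
  have h' (ρ : ℝ) (h0 : 0 ≤ ρ) (h1 : ρ < 1) : ρ * (M - b) ≤ b := by
    have hfactor : (1 - ρ) * (ρ * (M - b) - b) ≤ 0 := by linarith [h ρ h0 h1]
    nlinarith
  rcases le_or_gt M b with hM | hM
  · linarith
  have : 1 ≤ b / (M - b) := le_of_forall_lt_imp_le_of_dense fun ρ hρ => by
    rcases lt_or_ge ρ 0 with hneg | hpos
    · exact hneg.le.trans (div_nonneg hb (by linarith))
    · rw [le_div_iff₀ (by linarith)]
      exact h' ρ hpos hρ
  rw [le_div_iff₀ (by linarith)] at this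
  linarith

lemma two_pow_mul_sum_rademacherSum_sq_le (v : ι → ℝ) :
    2 ^ Fintype.card ι * ∑ σ, rademacherSum v σ ^ 2 ≤ 2 * (∑ σ, |rademacherSum v σ|) ^ 2 := by
  set f : (ι → ℤˣ) → ℝ := fun σ => |rademacherSum v σ|
  have hf (σ : ι → ℤˣ) : f (-σ) = f σ := by simp [f, rademacherSum_neg]
  have hparseval : ∑ A : Finset ι, walshCoeff f A ^ 2
      = 2 ^ Fintype.card ι * ∑ σ, rademacherSum v σ ^ 2 := by
    simp [sum_walshCoeff_sq, f]
  refine le_two_mul_of_forall_mul_le (sq_nonneg _) fun ρ h0 h1 => ?_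
  calc ρ * (2 ^ Fintype.card ι * ∑ σ, rademacherSum v σ ^ 2)
      = 2 ^ Fintype.card ι * (ρ * ∑ σ, rademacherSum v σ ^ 2) := by ring
    _ ≤ 2 ^ Fintype.card ι * ∑ σ, ∑ η, noiseKernel ρ η * (f σ * f (σ * η)) := by
        gcongr
        exact mul_sum_rademacherSum_sq_le v h0 h1.le
    _ = ∑ A : Finset ι, ρ ^ #A * walshCoeff f A ^ 2 := sum_noiseKernel_mul_eq_sum_walshCoeff_sq f ρ
    _ ≤ (1 - ρ ^ 2) * walshCoeff f ∅ ^ 2 + ρ ^ 2 * ∑ A : Finset ι, walshCoeff f A ^ 2 :=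
        sum_pow_card_mul_walshCoeff_sq_le hf h0 h1.le
    _ = _ := by rw [walshCoeff_empty, hparseval]

theorem sqrt_sum_sq_mul_two_pow_le_sqrt_two_mul_sum_abs_rademacherSum (v : ι → ℝ) :
    √(∑ i, v i ^ 2) * 2 ^ Fintype.card ι ≤ √2 * ∑ σ, |rademacherSum v σ| := by
  have h := two_pow_mul_sum_rademacherSum_sq_le v
  rw [sum_rademacherSum_sq] at h
  have hv : 0 ≤ ∑ i, v i ^ 2 := sum_nonneg fun i _ => sq_nonneg _
  rw [← pow_le_pow_iff_left₀ (by positivity) (by positivity) two_ne_zero, mul_pow, mul_pow,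
    Real.sq_sqrt hv, Real.sq_sqrt zero_le_two]
  linarith

end BooleanCube

section Bilinear

variable {ι κ : Type*} [Fintype ι] [DecidableEq ι] [Fintype κ] [DecidableEq κ]

lemma ContinuousLinearMap.apply_eq_sum_mul_apply_single (f : (ι → ℝ) →L[ℝ] ℝ) (x : ι → ℝ) :
    f x = ∑ i, x i * f (Pi.single i 1) := by
  conv_lhs => rw [← univ_sum_single x]
  refine (map_sum f _ _).trans (sum_congr rfl fun i _ => ?_)
  rw [← smul_eq_mul, ← map_smul, ← Pi.single_smul', smul_eq_mul, mul_one]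

lemma sum_abs_apply_single_le_opNorm (f : (ι → ℝ) →L[ℝ] ℝ) :
    ∑ i, |f (Pi.single i 1)| ≤ ‖f‖ := by
  let x : ι → ℝ := fun i => SignType.sign (f (Pi.single i 1))
  have hx : ‖x‖ ≤ 1 := (pi_norm_le_iff_of_nonneg zero_le_one).2 fun i => by
    simp only [x, Real.norm_eq_abs]
    cases SignType.sign (f (Pi.single i 1)) <;> simp
  calc ∑ i, |f (Pi.single i 1)| = f x := by
        simp [f.apply_eq_sum_mul_apply_single x, x]
    _ ≤ ‖f x‖ := Real.le_norm_self _
    _ ≤ ‖f‖ * ‖x‖ := f.le_opNorm x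
    _ ≤ ‖f‖ := mul_le_of_le_one_right (norm_nonneg f) hx

theorem sum_sqrt_sum_sq_apply_single_le (T : (ι → ℝ) →L[ℝ] (κ → ℝ) →L[ℝ] ℝ) :
    ∑ j, √(∑ k, T (Pi.single j 1) (Pi.single k 1) ^ 2) ≤ √2 * ‖T‖ := by
  let signVector (σ : κ → ℤˣ) : κ → ℝ := fun k => ((σ k : ℤ) : ℝ)
  have hrow (j : ι) (σ : κ → ℤˣ) :
      rademacherSum (fun k => T (Pi.single j 1) (Pi.single k 1)) σ
        = T (Pi.single j 1) (signVector σ) := by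
    rw [(T (Pi.single j 1)).apply_eq_sum_mul_apply_single]
    exact sum_congr rfl fun k _ => mul_comm _ _
  have hcolumn (σ : κ → ℤˣ) : ∑ j, |T (Pi.single j 1) (signVector σ)| ≤ ‖T‖ :=
    calc ∑ j, |T (Pi.single j 1) (signVector σ)|
        = ∑ j, |T.flip (signVector σ) (Pi.single j 1)| := by
          simp only [ContinuousLinearMap.flip_apply]
      _ ≤ ‖T.flip (signVector σ)‖ := sum_abs_apply_single_le_opNorm _
      _ ≤ ‖T.flip‖ * ‖signVector σ‖ := T.flip.le_opNorm _
      _ ≤ ‖T‖ := by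
          rw [T.opNorm_flip]
          refine mul_le_of_le_one_right (norm_nonneg T)
            ((pi_norm_le_iff_of_nonneg zero_le_one).2 fun k => ?_)
          rw [Real.norm_eq_abs, Int.abs_units_cast]
  refine le_of_mul_le_mul_right ?_ (by positivity : (0 : ℝ) < 2 ^ Fintype.card κ)
  calc (∑ j, √(∑ k, T (Pi.single j 1) (Pi.single k 1) ^ 2)) * 2 ^ Fintype.card κ
      ≤ ∑ j, √2 * ∑ σ, |rademacherSum (fun k => T (Pi.single j 1) (Pi.single k 1)) σ| := by
        rw [sum_mul]
        exact sum_le_sum fun j _ => sqrt_sum_sq_mul_two_pow_le_sqrt_two_mul_sum_abs_rademacherSum _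
    _ = √2 * ∑ σ : κ → ℤˣ, ∑ j, |T (Pi.single j 1) (signVector σ)| := by
        simp only [hrow, ← mul_sum]
        rw [sum_comm]
    _ ≤ √2 * ∑ _σ : κ → ℤˣ, ‖T‖ :=
        mul_le_mul_of_nonneg_left (sum_le_sum fun σ _ => hcolumn σ) (Real.sqrt_nonneg 2)
    _ = √2 * ‖T‖ * 2 ^ Fintype.card κ := by
        rw [sum_signs_const]
        ring

end Bilinear

section MixedNorms

variable {ι κ : Type*} [Fintype ι] [Fintype κ]

lemma sum_rpow_two_thirds_mul_rpow_two_thirds_le (f g : ι → ℝ) (hf : ∀ i, 0 ≤ f i)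
    (hg : ∀ i, 0 ≤ g i) :
    ∑ i, f i ^ (2 / 3 : ℝ) * g i ^ (2 / 3 : ℝ)
      ≤ (∑ i, f i) ^ (2 / 3 : ℝ) * √(∑ i, g i ^ 2) ^ (2 / 3 : ℝ) := by
  have hpq : Real.HolderConjugate (3 / 2) 3 :=
    Real.holderConjugate_iff.mpr ⟨by norm_num, by norm_num⟩
  have h := Real.inner_le_Lp_mul_Lq_of_nonneg univ hpq (f := fun i => f i ^ (2 / 3 : ℝ))
    (g := fun i => g i ^ (2 / 3 : ℝ)) (fun i _ => Real.rpow_nonneg (hf i) _)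
    (fun i _ => Real.rpow_nonneg (hg i) _)
  have hf' (i : ι) : (f i ^ (2 / 3 : ℝ)) ^ (3 / 2 : ℝ) = f i := by
    rw [← Real.rpow_mul (hf i)]; norm_num
  have hg' (i : ι) : (g i ^ (2 / 3 : ℝ)) ^ (3 : ℝ) = g i ^ 2 := by
    rw [← Real.rpow_mul (hg i)]; norm_num
  have hsqrt : √(∑ i, g i ^ 2) ^ (2 / 3 : ℝ) = (∑ i, g i ^ 2) ^ (1 / 3 : ℝ) := by
    rw [Real.sqrt_eq_rpow, ← Real.rpow_mul (sum_nonneg fun i _ => sq_nonneg _)]; norm_num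
  simp only [hf', hg'] at h
  rw [hsqrt]
  convert h using 3; norm_num

lemma sqrt_sum_sq_sum_abs_le (a : ι → κ → ℝ) :
    √(∑ j, (∑ k, |a j k|) ^ 2) ≤ ∑ k, √(∑ j, a j k ^ 2) := by
  let u (k : κ) : EuclideanSpace ℝ ι := WithLp.toLp 2 fun j => |a j k|
  calc √(∑ j, (∑ k, |a j k|) ^ 2) = ‖∑ k, u k‖ := by
        simp [EuclideanSpace.norm_eq, u]
    _ ≤ ∑ k, ‖u k‖ := norm_sum_le _ _
    _ = ∑ k, √(∑ j, a j k ^ 2) := by simp [EuclideanSpace.norm_eq, u]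

theorem sum_sum_abs_rpow_four_thirds_le (a : ι → κ → ℝ) :
    ∑ j, ∑ k, |a j k| ^ (4 / 3 : ℝ)
      ≤ (∑ j, √(∑ k, a j k ^ 2)) ^ (2 / 3 : ℝ) * (∑ k, √(∑ j, a j k ^ 2)) ^ (2 / 3 : ℝ) := by
  have hsplit (x : ℝ) : |x| ^ (4 / 3 : ℝ) = |x| ^ (2 / 3 : ℝ) * |x| ^ (2 / 3 : ℝ) := by
    rw [← Real.rpow_add' (abs_nonneg x) (by norm_num)]; norm_num
  calc ∑ j, ∑ k, |a j k| ^ (4 / 3 : ℝ)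
      ≤ ∑ j, √(∑ k, a j k ^ 2) ^ (2 / 3 : ℝ) * (∑ k, |a j k|) ^ (2 / 3 : ℝ) := by
        refine sum_le_sum fun j _ => ?_
        simp only [hsplit]
        simpa [mul_comm] using sum_rpow_two_thirds_mul_rpow_two_thirds_le (fun k => |a j k|)
          (fun k => |a j k|) (fun k => abs_nonneg _) (fun k => abs_nonneg _)
    _ ≤ (∑ j, √(∑ k, a j k ^ 2)) ^ (2 / 3 : ℝ) * √(∑ j, (∑ k, |a j k|) ^ 2) ^ (2 / 3 : ℝ) :=
        sum_rpow_two_thirds_mul_rpow_two_thirds_le _ _ (fun j => Real.sqrt_nonneg _)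
          (fun j => sum_nonneg fun k _ => abs_nonneg _)
    _ ≤ _ := by
        gcongr
        exact sqrt_sum_sq_sum_abs_le a

end MixedNorms

/-- Littlewood's 4/3 inequality for real bilinear forms on `ℓ_∞^n`. -/
theorem littlewood_four_thirds (n : ℕ)
    (T : (Fin n → ℝ) →L[ℝ] (Fin n → ℝ) →L[ℝ] ℝ) :
    (∑ j : Fin n, ∑ k : Fin n,
        |T (Pi.single j 1) (Pi.single k 1)| ^ ((4 : ℝ) / 3)) ^ ((3 : ℝ) / 4)
      ≤ Real.sqrt 2 * ‖T‖ := by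
  have hrows := sum_sqrt_sum_sq_apply_single_le T
  have hcols : ∑ k, √(∑ j, T (Pi.single j 1) (Pi.single k 1) ^ 2) ≤ √2 * ‖T‖ := by
    simpa [ContinuousLinearMap.opNorm_flip] using sum_sqrt_sum_sq_apply_single_le T.flip
  have hK : 0 ≤ √2 * ‖T‖ := by positivity
  calc (∑ j : Fin n, ∑ k : Fin n,
        |T (Pi.single j 1) (Pi.single k 1)| ^ ((4 : ℝ) / 3)) ^ ((3 : ℝ) / 4)
      ≤ ((√2 * ‖T‖) ^ (2 / 3 : ℝ) * (√2 * ‖T‖) ^ (2 / 3 : ℝ)) ^ ((3 : ℝ) / 4) := by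
        gcongr
        refine (sum_sum_abs_rpow_four_thirds_le _).trans ?_
        gcongr
    _ = √2 * ‖T‖ := by
        rw [← Real.rpow_add' hK (by norm_num), ← Real.rpow_mul hK]
        norm_num
end

section
/- For m ≥ 2 and any m-linear form T : ℓ_∞^n × ··· × ℓ_∞^n → ℝ, the Bohnenblust–Hille-type mixed inequality holds: for each fixed i, (∑_{ĵ_i} |T(e_{j_1},...,e_{j_m})|^2)^{1/2} ≤ (√2)^{m-1} ∫_{[0,1]^{m-1}} |∑_{ĵ_i} r_{j_2}(t_2)···r_{j_m}(t_m) T(e_{j_1},...,e_{j_m})| dt ≤ (√2)^{m-1} ‖T(e_{j_i}, ·,...,·)‖ for each fixed value of j_i, where ∑_{ĵ_i} sums over all indices except j_i. -/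
/-!
On the Boolean cube, `f ε = |∑ᵢ εᵢ aᵢ|` is even, so its Walsh coefficients vanish on odd levels and
every nonconstant level has size at least two. Parseval then gives the Poincaré inequality with
constant `1/2`: `Var f ≤ ½ ∑ᵢ ‖Dᵢ f‖₂² ≤ ½ ∑ᵢ aᵢ² = ½ 𝔼 f²`, that is `𝔼 f² ≤ 2 (𝔼 f)²`, which is
Khinchin's `L¹` inequality with constant `√2`. The multiple version is obtained one slot at a time,
Minkowski's inequality moving the `ℓ²` norm over the remaining slots inside the expectation. For
the second estimate, the Rademacher sum at a sign pattern `ε` is the value of `T` at `e_{j₀}` in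
slot `i` and at the sign vectors `ε k` in the other slots, all of sup norm at most one.
-/

open Finset Function
open scoped BigOperators

lemma expect_eq_zero_of_comp_eq_neg {α : Type*} [Fintype α] (σ : Equiv.Perm α) {g : α → ℝ}
    (hg : ∀ x, g (σ x) = -g x) : 𝔼 x, g x = 0 := by
  have h : 𝔼 x, -g x = 𝔼 x, g x := Fintype.expect_equiv σ _ _ fun x => (hg x).symm
  rw [expect_neg_distrib] at h
  linarith

lemma sqrt_sum_sq_sum_abs_le_s19 {α β : Type*} (X : Finset α) (T : Finset β) (h : β → α → ℝ) :
    √(∑ x ∈ X, (∑ t ∈ T, |h t x|) ^ 2) ≤ ∑ t ∈ T, √(∑ x ∈ X, h t x ^ 2) := by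
  have hnorm : ∀ g : X → ℝ, ‖(WithLp.toLp 2 g : EuclideanSpace ℝ X)‖ = √(∑ x : X, g x ^ 2) :=
    fun g => by simp [EuclideanSpace.norm_eq]
  have := norm_sum_le T fun t => (WithLp.toLp 2 fun x : X => |h t x| : EuclideanSpace ℝ X)
  rw [← WithLp.toLp_sum, hnorm] at this
  simpa [hnorm, sum_attach X fun x => (∑ t ∈ T, |h t x|) ^ 2,
    fun t => sum_attach X fun x => h t x ^ 2] using this

lemma sqrt_sum_sq_expect_abs_le {α β : Type*} [Fintype β] (X : Finset α) (h : β → α → ℝ) :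
    √(∑ x ∈ X, (𝔼 t, |h t x|) ^ 2) ≤ 𝔼 t, √(∑ x ∈ X, h t x ^ 2) := by
  simp only [Fintype.expect_eq_sum_div_card, div_pow, ← sum_div]
  rw [Real.sqrt_div' _ (by positivity), Real.sqrt_sq (by positivity)]
  exact div_le_div_of_nonneg_right (sqrt_sum_sq_sum_abs_le_s19 X univ h) (by positivity)

lemma expect_expect_update {κ β : Type*} [Fintype κ] [DecidableEq κ] [Fintype β]
    (k₀ : κ) (F : (κ → β) → ℝ) : 𝔼 δ, 𝔼 ε, F (update ε k₀ δ) = 𝔼 ε, F ε := by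
  rcases isEmpty_or_nonempty β with hβ | hβ
  · have : IsEmpty (κ → β) := ⟨fun ε => hβ.false (ε k₀)⟩
    simp
  let e : Equiv.Perm (β × (κ → β)) :=
    Involutive.toPerm (fun p => (p.2 k₀, update p.2 k₀ p.1)) fun p => by simp
  calc 𝔼 δ, 𝔼 ε, F (update ε k₀ δ) = 𝔼 p : β × (κ → β), F (e p).2 := by
        rw [← Finset.expect_product', univ_product_univ]; rfl
    _ = 𝔼 p : β × (κ → β), F p.2 := Fintype.expect_equiv e _ _ fun _ => rfl |>.symm
    _ = 𝔼 ε, F ε := by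
        rw [← univ_product_univ, Finset.expect_product' univ univ fun (_ : β) ε => F ε,
          expect_const univ_nonempty]

lemma MultilinearMap.apply_eq_sum_prod_smul_apply_single {ι κ R M : Type*} [Fintype ι]
    [DecidableEq ι] [Fintype κ] [DecidableEq κ] [CommSemiring R] [AddCommMonoid M] [Module R M]
    (T : MultilinearMap R (fun _ : ι => κ → R) M) (x : ι → κ → R) :
    T x = ∑ j : ι → κ, (∏ k, x k (j k)) • T fun k => Pi.single (j k) 1 := by
  have hx : x = fun k => ∑ v, x k v • Pi.single v 1 := funext fun k => pi_eq_sum_univ' _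
  conv_lhs => rw [hx, T.map_sum]
  exact sum_congr rfl fun j _ => T.map_smul_univ _ _

namespace Rademacher

noncomputable def boolSign (b : Bool) : ℝ := if b then 1 else -1

@[simp] lemma boolSign_true : boolSign true = 1 := rfl

@[simp] lemma boolSign_false : boolSign false = -1 := rfl

lemma boolSign_mul_self (b : Bool) : boolSign b * boolSign b = 1 := by cases b <;> norm_num

lemma boolSign_not (b : Bool) : boolSign (!b) = -boolSign b := by cases b <;> simp

lemma abs_boolSign (b : Bool) : |boolSign b| = 1 := by cases b <;> simp

def negAll {ι : Type*} : Equiv.Perm (ι → Bool) := Equiv.piCongrRight fun _ => Equiv.boolNot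

@[simp] lemma negAll_apply {ι : Type*} (ε : ι → Bool) (i : ι) : negAll ε i = !ε i := rfl

noncomputable def walsh {ι : Type*} (A : Finset ι) (ε : ι → Bool) : ℝ := ∏ i ∈ A, boolSign (ε i)

lemma walsh_negAll {ι : Type*} (A : Finset ι) (ε : ι → Bool) :
    walsh A (negAll ε) = (-1) ^ #A * walsh A ε := by
  simp only [walsh, negAll_apply, boolSign_not, neg_eq_neg_one_mul (boolSign _), prod_mul_distrib,
    prod_const]

variable {ι : Type*} [DecidableEq ι]

def flipAt (i : ι) : Equiv.Perm (ι → Bool) :=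
  Involutive.toPerm (fun ε => update ε i (!ε i)) fun ε => by
    ext k
    by_cases h : k = i <;> simp [h]

lemma flipAt_apply (i : ι) (ε : ι → Bool) : flipAt i ε = update ε i (!ε i) := rfl

@[simp] lemma flipAt_apply_self (i : ι) (ε : ι → Bool) : flipAt i ε i = !ε i := by
  simp [flipAt_apply]

lemma flipAt_apply_of_ne {i k : ι} (h : k ≠ i) (ε : ι → Bool) : flipAt i ε k = ε k := by
  simp [flipAt_apply, h]

lemma walsh_flipAt (A : Finset ι) (i : ι) (ε : ι → Bool) :
    walsh A (flipAt i ε) = (if i ∈ A then -1 else 1) * walsh A ε := by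
  split_ifs with h
  · rw [walsh, walsh, ← mul_prod_erase A _ h, ← mul_prod_erase A _ h, flipAt_apply_self,
      boolSign_not, prod_congr rfl fun k hk => by rw [flipAt_apply_of_ne (ne_of_mem_erase hk)]]
    ring
  · rw [one_mul]
    exact prod_congr rfl fun k hk => by rw [flipAt_apply_of_ne (ne_of_mem_of_not_mem hk h)]

noncomputable def discreteDeriv (i : ι) (f : (ι → Bool) → ℝ) (ε : ι → Bool) : ℝ :=
  (f ε - f (flipAt i ε)) / 2

variable [Fintype ι]

noncomputable def fourierCoeff (f : (ι → Bool) → ℝ) (A : Finset ι) : ℝ := 𝔼 ε, f ε * walsh A ε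

lemma sum_walsh_mul_walsh (ε ε' : ι → Bool) :
    ∑ A, walsh A ε * walsh A ε' = if ε = ε' then (Fintype.card (ι → Bool) : ℝ) else 0 := by
  have hprod : ∑ A, walsh A ε * walsh A ε' = ∏ i, (boolSign (ε i) * boolSign (ε' i) + 1) := by
    simp only [prod_add, prod_const_one, mul_one, walsh, ← prod_mul_distrib, powerset_univ]
  rw [hprod]
  split_ifs with h
  · subst h
    norm_num [boolSign_mul_self]
  · obtain ⟨i, hi⟩ := Function.ne_iff.1 h
    refine prod_eq_zero (mem_univ i) ?_
    cases hb : ε i <;> cases hb' : ε' i <;> simp_all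

lemma fourier_inversion (f : (ι → Bool) → ℝ) (ε : ι → Bool) :
    f ε = ∑ A, fourierCoeff f A * walsh A ε := by
  have hcard : (Fintype.card (ι → Bool) : ℝ) ≠ 0 := Nat.cast_ne_zero.2 Fintype.card_ne_zero
  calc f ε = 𝔼 ε', if ε' = ε then f ε' * Fintype.card (ι → Bool) else 0 := by
        rw [Fintype.expect_eq_sum_div_card, sum_ite_eq' univ ε, if_pos (mem_univ ε),
          mul_div_cancel_right₀ _ hcard]
    _ = 𝔼 ε', f ε' * ∑ A, walsh A ε' * walsh A ε := by
        simp only [sum_walsh_mul_walsh, mul_ite, mul_zero]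
    _ = ∑ A, fourierCoeff f A * walsh A ε := by
        simp only [fourierCoeff, expect_mul, mul_sum, ← expect_sum_comm, mul_assoc]

theorem parseval (f : (ι → Bool) → ℝ) : 𝔼 ε, f ε ^ 2 = ∑ A, fourierCoeff f A ^ 2 := by
  calc 𝔼 ε, f ε ^ 2 = 𝔼 ε, ∑ A, fourierCoeff f A * (f ε * walsh A ε) := by
        refine expect_congr rfl fun ε _ => ?_
        conv_lhs => rw [sq]; enter [2]; rw [fourier_inversion f ε]
        simp only [mul_sum, mul_left_comm]
    _ = ∑ A, fourierCoeff f A ^ 2 := by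
        simp only [expect_sum_comm, ← mul_expect, sq, fourierCoeff]

lemma fourierCoeff_empty (f : (ι → Bool) → ℝ) : fourierCoeff f ∅ = 𝔼 ε, f ε := by
  simp [fourierCoeff, walsh]

lemma fourierCoeff_discreteDeriv (f : (ι → Bool) → ℝ) (i : ι) (A : Finset ι) :
    fourierCoeff (discreteDeriv i f) A = if i ∈ A then fourierCoeff f A else 0 := by
  have hflip : 𝔼 ε, f (flipAt i ε) * walsh A ε = (if i ∈ A then -1 else 1) * fourierCoeff f A := by
    rw [fourierCoeff, mul_expect]
    refine Fintype.expect_equiv (flipAt i) _ _ fun ε => ?_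
    rw [walsh_flipAt]
    split_ifs <;> ring
  calc fourierCoeff (discreteDeriv i f) A
      = (fourierCoeff f A - 𝔼 ε, f (flipAt i ε) * walsh A ε) / 2 := by
        simp only [fourierCoeff, discreteDeriv, expect_div, ← expect_sub_distrib]
        exact expect_congr rfl fun ε _ => by ring
    _ = if i ∈ A then fourierCoeff f A else 0 := by
        rw [hflip]
        split_ifs <;> ring

lemma fourierCoeff_eq_zero_of_odd (f : (ι → Bool) → ℝ) (hf : ∀ ε, f (negAll ε) = f ε)
    {A : Finset ι} (hA : Odd #A) : fourierCoeff f A = 0 :=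
  expect_eq_zero_of_comp_eq_neg negAll fun ε => by rw [hf, walsh_negAll, hA.neg_one_pow]; ring

theorem expect_sq_sub_sq_expect_le_of_even (f : (ι → Bool) → ℝ) (hf : ∀ ε, f (negAll ε) = f ε) :
    𝔼 ε, f ε ^ 2 - (𝔼 ε, f ε) ^ 2 ≤ 1 / 2 * ∑ i, 𝔼 ε, discreteDeriv i f ε ^ 2 := by
  have hvariance : 𝔼 ε, f ε ^ 2 - (𝔼 ε, f ε) ^ 2 = ∑ A ∈ univ.erase ∅, fourierCoeff f A ^ 2 := by
    rw [parseval, ← add_sum_erase _ _ (mem_univ ∅), fourierCoeff_empty]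
    ring
  have hinfluence :
      ∑ i, 𝔼 ε, discreteDeriv i f ε ^ 2 = ∑ A, #A * fourierCoeff f A ^ 2 := by
    simp only [parseval, fourierCoeff_discreteDeriv, ite_pow, ne_eq, OfNat.ofNat_ne_zero,
      not_false_eq_true, zero_pow]
    rw [sum_comm]
    simp [sum_ite_mem]
  have hlevel : ∀ A ∈ univ.erase ∅, fourierCoeff f A ^ 2 ≤ 1 / 2 * (#A * fourierCoeff f A ^ 2) := by
    intro A hA
    rcases Nat.even_or_odd #A with hA_even | hA_odd
    · have hA_card : (2 : ℝ) ≤ #A := by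
        have hA_ne := card_ne_zero.2 (nonempty_iff_ne_empty.2 (ne_of_mem_erase hA))
        obtain ⟨r, hr⟩ := hA_even
        exact_mod_cast (by omega : 2 ≤ #A)
      nlinarith [sq_nonneg (fourierCoeff f A)]
    · simp [fourierCoeff_eq_zero_of_odd f hf hA_odd]
  calc 𝔼 ε, f ε ^ 2 - (𝔼 ε, f ε) ^ 2 ≤ ∑ A ∈ univ.erase ∅, 1 / 2 * (#A * fourierCoeff f A ^ 2) := by
        rw [hvariance]
        exact sum_le_sum hlevel
    _ ≤ ∑ A, 1 / 2 * (#A * fourierCoeff f A ^ 2) :=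
        sum_le_sum_of_subset_of_nonneg (subset_univ _) fun _ _ _ => by positivity
    _ = 1 / 2 * ∑ i, 𝔼 ε, discreteDeriv i f ε ^ 2 := by
        rw [hinfluence, mul_sum]

lemma expect_boolSign_mul_boolSign (i j : ι) :
    𝔼 ε : ι → Bool, boolSign (ε i) * boolSign (ε j) = if i = j then 1 else 0 := by
  split_ifs with h
  · subst h
    simp [boolSign_mul_self]
  · exact expect_eq_zero_of_comp_eq_neg (flipAt i) fun ε => by
      rw [flipAt_apply_self, flipAt_apply_of_ne (Ne.symm h), boolSign_not, neg_mul]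

lemma expect_sq_sum_boolSign_mul (a : ι → ℝ) :
    𝔼 ε : ι → Bool, (∑ i, boolSign (ε i) * a i) ^ 2 = ∑ i, a i ^ 2 := by
  calc 𝔼 ε : ι → Bool, (∑ i, boolSign (ε i) * a i) ^ 2
      = ∑ i, ∑ j, a i * a j * 𝔼 ε : ι → Bool, boolSign (ε i) * boolSign (ε j) := by
        simp only [sq, sum_mul_sum, expect_sum_comm, mul_expect]
        exact sum_congr rfl fun i _ => sum_congr rfl fun j _ =>
          expect_congr rfl fun ε _ => by ring
    _ = ∑ i, a i ^ 2 := by simp [expect_boolSign_mul_boolSign, sq]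

lemma sum_boolSign_flipAt_mul (a : ι → ℝ) (i : ι) (ε : ι → Bool) :
    ∑ k, boolSign (flipAt i ε k) * a k = ∑ k, boolSign (ε k) * a k - 2 * boolSign (ε i) * a i := by
  have hterm : ∀ k, boolSign (flipAt i ε k) * a k
      = boolSign (ε k) * a k - if k = i then 2 * boolSign (ε i) * a i else 0 := by
    intro k
    by_cases h : k = i
    · subst h
      rw [flipAt_apply_self, boolSign_not, if_pos rfl]
      ring
    · rw [flipAt_apply_of_ne h, if_neg h, sub_zero]
  simp only [hterm, sum_sub_distrib, sum_ite_eq', mem_univ, if_true]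

theorem khinchin_L1 (a : ι → ℝ) :
    √(∑ i, a i ^ 2) ≤ √2 * 𝔼 ε : ι → Bool, |∑ i, boolSign (ε i) * a i| := by
  set S : (ι → Bool) → ℝ := fun ε => ∑ i, boolSign (ε i) * a i with hS
  have heven : ∀ ε, |S (negAll ε)| = |S ε| := fun ε => by
    simp only [hS, negAll_apply, boolSign_not, neg_mul, sum_neg_distrib, abs_neg]
  have hinfluence : ∀ i, 𝔼 ε, discreteDeriv i (fun ε => |S ε|) ε ^ 2 ≤ a i ^ 2 := fun i =>
    expect_le univ_nonempty fun ε _ => by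
      have hflip : S (flipAt i ε) = S ε - 2 * boolSign (ε i) * a i := sum_boolSign_flipAt_mul a i ε
      refine sq_le_sq.2 ?_
      calc |(|S ε| - |S (flipAt i ε)|) / 2| ≤ |S ε - S (flipAt i ε)| / 2 := by
            rw [abs_div, abs_two]
            exact div_le_div_of_nonneg_right (abs_abs_sub_abs_le_abs_sub _ _) zero_le_two
        _ = |a i| := by
            rw [hflip, sub_sub_cancel, abs_mul, abs_mul, abs_boolSign]
            simp
  have hpoincare := expect_sq_sub_sq_expect_le_of_even (fun ε => |S ε|) heven
  have hsecond : 𝔼 ε, |S ε| ^ 2 = ∑ i, a i ^ 2 := by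
    simp only [sq_abs, hS, expect_sq_sum_boolSign_mul]
  rw [hsecond] at hpoincare
  have hinfluence_sum := sum_le_sum fun i (_ : i ∈ univ) => hinfluence i
  refine Real.sqrt_le_iff.2 ⟨by positivity, ?_⟩
  rw [mul_pow, Real.sq_sqrt zero_le_two]
  linarith

section Chaos

variable {κ ν : Type*} [Fintype κ] [DecidableEq κ] [Fintype ν] [DecidableEq ν]

def slice (jb : κ → ν) (s : Finset κ) : Finset (κ → ν) := {j | ∀ k ∉ s, j k = jb k}

lemma mem_slice {jb : κ → ν} {s : Finset κ} {j : κ → ν} :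
    j ∈ slice jb s ↔ ∀ k ∉ s, j k = jb k := by
  simp [slice]

lemma slice_empty (jb : κ → ν) : slice jb ∅ = {jb} := by
  ext j
  simp [mem_slice, funext_iff]

lemma slice_univ_erase (jb : κ → ν) (i : κ) :
    slice jb (univ.erase i) = ({j | j i = jb i} : Finset (κ → ν)) := by
  ext j
  simp [mem_slice]

lemma sum_slice_insert {M : Type*} [AddCommMonoid M] (jb : κ → ν) {s : Finset κ} {k₀ : κ}
    (hk : k₀ ∉ s) (g : (κ → ν) → M) :
    ∑ j ∈ slice jb (insert k₀ s), g j = ∑ j ∈ slice jb s, ∑ v, g (update j k₀ v) := by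
  rw [← sum_product' (f := fun j v => g (update j k₀ v))]
  symm
  refine sum_nbij' (fun p => update p.1 k₀ p.2) (fun j => (update j k₀ (jb k₀), j k₀))
    ?_ ?_ ?_ ?_ fun _ _ => rfl
  · rintro ⟨j, v⟩ hj
    simp only [mem_product, mem_slice] at hj
    refine mem_slice.2 fun k hk' => ?_
    simp only [mem_insert, not_or] at hk'
    simp [update_of_ne hk'.1, hj.1 k hk'.2]
  · intro j hj
    simp only [mem_product, mem_slice, mem_univ, and_true]
    intro k hk'
    by_cases h : k = k₀
    · simp [h]
    · simp [update_of_ne h, mem_slice.1 hj k (by simp [h, hk'])]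
  · rintro ⟨j, v⟩ hj
    simp only [mem_product, mem_slice] at hj
    simp [← hj.1 k₀ hk]
  · intro j _
    simp

noncomputable def chaos (jb : κ → ν) (s : Finset κ) (c : (κ → ν) → ℝ)
    (ε : κ → ν → Bool) : ℝ :=
  ∑ j ∈ slice jb s, (∏ k ∈ s, boolSign (ε k (j k))) * c j

lemma chaos_empty (jb : κ → ν) (c : (κ → ν) → ℝ) (ε : κ → ν → Bool) :
    chaos jb ∅ c ε = c jb := by
  simp [chaos, slice_empty]

lemma chaos_insert_update (jb : κ → ν) {s : Finset κ} {k₀ : κ} (hk : k₀ ∉ s)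
    (c : (κ → ν) → ℝ) (ε : κ → ν → Bool) (δ : ν → Bool) :
    chaos jb (insert k₀ s) c (update ε k₀ δ)
      = chaos jb s (fun j => ∑ v, boolSign (δ v) * c (update j k₀ v)) ε := by
  rw [chaos, chaos, sum_slice_insert jb hk]
  refine sum_congr rfl fun j _ => ?_
  rw [mul_sum]
  refine sum_congr rfl fun v _ => ?_
  have hs : ∀ k ∈ s, boolSign (update ε k₀ δ k (update j k₀ v k)) = boolSign (ε k (j k)) :=
    fun k hks => by
      have hne : k ≠ k₀ := ne_of_mem_of_not_mem hks hk
      rw [update_of_ne hne, update_of_ne hne]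
  rw [prod_insert hk, update_self, update_self, prod_congr rfl hs]
  ring

theorem multiple_khinchin_L1 (jb : κ → ν) (s : Finset κ) (c : (κ → ν) → ℝ) :
    √(∑ j ∈ slice jb s, c j ^ 2) ≤ √2 ^ #s * 𝔼 ε, |chaos jb s c ε| := by
  induction s using Finset.induction_on generalizing c with
  | empty => simp [slice_empty, chaos_empty, Real.sqrt_sq_eq_abs]
  | insert k₀ s hk ih =>
    set d : (ν → Bool) → (κ → ν) → ℝ := fun δ j => ∑ v, boolSign (δ v) * c (update j k₀ v)
    have hfiber : ∀ j, ∑ v, c (update j k₀ v) ^ 2 ≤ (√2 * 𝔼 δ, |d δ j|) ^ 2 := fun j =>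
      (Real.sqrt_le_iff.1 (khinchin_L1 fun v => c (update j k₀ v))).2
    calc √(∑ j ∈ slice jb (insert k₀ s), c j ^ 2)
        = √(∑ j ∈ slice jb s, ∑ v, c (update j k₀ v) ^ 2) := by rw [sum_slice_insert jb hk]
      _ ≤ √(∑ j ∈ slice jb s, (√2 * 𝔼 δ, |d δ j|) ^ 2) :=
          Real.sqrt_le_sqrt (sum_le_sum fun j _ => hfiber j)
      _ = √2 * √(∑ j ∈ slice jb s, (𝔼 δ, |d δ j|) ^ 2) := by
          simp_rw [mul_pow, ← mul_sum]
          rw [Real.sqrt_mul (sq_nonneg _), Real.sqrt_sq (Real.sqrt_nonneg _)]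
      _ ≤ √2 * 𝔼 δ, √(∑ j ∈ slice jb s, d δ j ^ 2) := by
          gcongr
          exact sqrt_sum_sq_expect_abs_le _ d
      _ ≤ √2 * 𝔼 δ, √2 ^ #s * 𝔼 ε, |chaos jb s (d δ) ε| := by
          gcongr with δ
          exact ih (d δ)
      _ = √2 ^ #(insert k₀ s) * 𝔼 ε, |chaos jb (insert k₀ s) c ε| := by
          have hupdate : ∀ δ ε, chaos jb s (d δ) ε
              = chaos jb (insert k₀ s) c (update ε k₀ δ) := fun δ ε =>
            (chaos_insert_update jb hk c ε δ).symm
          simp_rw [hupdate]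
          rw [← mul_expect, expect_expect_update k₀ fun ε => |chaos jb (insert k₀ s) c ε|]
          rw [card_insert_of_notMem hk, pow_succ]
          ring

lemma chaos_eq_apply_update (T : ContinuousMultilinearMap ℝ (fun _ : κ => ν → ℝ) ℝ) (i : κ) (j₀ : ν)
    (ε : κ → ν → Bool) :
    chaos (fun _ => j₀) (univ.erase i) (fun j => T fun k => Pi.single (j k) 1) ε
      = T (update (fun k v => boolSign (ε k v)) i (Pi.single j₀ 1)) := by
  rw [← T.coe_coe, MultilinearMap.apply_eq_sum_prod_smul_apply_single, chaos,
    slice_univ_erase, sum_filter]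
  refine sum_congr rfl fun j _ => ?_
  have hprod : ∏ k ∈ univ.erase i, update (fun k v => boolSign (ε k v)) i (Pi.single j₀ 1) k (j k)
      = ∏ k ∈ univ.erase i, boolSign (ε k (j k)) :=
    prod_congr rfl fun k hk => by rw [update_of_ne (ne_of_mem_erase hk)]
  rw [← mul_prod_erase _ _ (mem_univ i), update_self, hprod, smul_eq_mul]
  by_cases h : j i = j₀ <;> simp [h]

end Chaos

end Rademacher

open Rademacher

theorem multiple_khinchin_slice_estimate_general (m : ℕ) (n : ℕ)
    (T : ContinuousMultilinearMap ℝ (fun _ : Fin m => (Fin n → ℝ)) ℝ)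
    (i : Fin m) (j₀ : Fin n) :
    (∑ j ∈ Finset.univ.filter (fun j : Fin m → Fin n => j i = j₀),
        |T (fun k => Pi.single (j k) 1)| ^ (2 : ℝ)) ^ ((1 : ℝ) / 2)
      ≤ Real.sqrt 2 ^ (m - 1) *
        ((∑ ε : Fin m → Fin n → Bool,
            |∑ j ∈ Finset.univ.filter (fun j : Fin m → Fin n => j i = j₀),
                (∏ k ∈ Finset.univ.erase i, (if ε k (j k) then (1 : ℝ) else -1)) *
                  T (fun k => Pi.single (j k) 1)|) /
          (Fintype.card (Fin m → Fin n → Bool))) ∧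
    Real.sqrt 2 ^ (m - 1) *
        ((∑ ε : Fin m → Fin n → Bool,
            |∑ j ∈ Finset.univ.filter (fun j : Fin m → Fin n => j i = j₀),
                (∏ k ∈ Finset.univ.erase i, (if ε k (j k) then (1 : ℝ) else -1)) *
                  T (fun k => Pi.single (j k) 1)|) /
          (Fintype.card (Fin m → Fin n → Bool)))
      ≤ Real.sqrt 2 ^ (m - 1) *
        sSup {c : ℝ | ∃ x : Fin m → (Fin n → ℝ),
          x i = Pi.single j₀ 1 ∧ (∀ k, k ≠ i → ‖x k‖ ≤ 1) ∧ c = |T x|} := by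
  have hslice : univ.filter (fun j : Fin m → Fin n => j i = j₀)
      = slice (fun _ => j₀) (univ.erase i) := (slice_univ_erase (fun _ => j₀) i).symm
  have hmean : ∀ ε, |∑ j ∈ univ.filter (fun j : Fin m → Fin n => j i = j₀),
      (∏ k ∈ univ.erase i, (if ε k (j k) then (1 : ℝ) else -1)) * T fun k => Pi.single (j k) 1|
      = |chaos (fun _ => j₀) (univ.erase i) (fun j => T fun k => Pi.single (j k) 1) ε| :=
    fun ε => by rw [hslice]; rfl
  simp_rw [hmean, ← Fintype.expect_eq_sum_div_card]
  have hcard : #(univ.erase i) = m - 1 := by simp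
  constructor
  · simp_rw [Real.rpow_two, sq_abs, ← Real.sqrt_eq_rpow, hslice, ← hcard]
    exact multiple_khinchin_L1 _ _ _
  · have hbdd : BddAbove {c : ℝ | ∃ x : Fin m → (Fin n → ℝ),
        x i = Pi.single j₀ 1 ∧ (∀ k, k ≠ i → ‖x k‖ ≤ 1) ∧ c = |T x|} := by
      refine ⟨‖T‖, ?_⟩
      rintro _ ⟨x, hxi, hx, rfl⟩
      have hx_le_one : ∀ k, ‖x k‖ ≤ 1 := fun k => by
        by_cases h : k = i
        · rw [h, hxi, Pi.norm_single, norm_one]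
        · exact hx k h
      simpa using T.le_opNorm_mul_prod_of_le hx_le_one
    gcongr
    refine expect_le univ_nonempty fun ε _ => le_csSup hbdd ⟨_, update_self .., fun k hk => ?_,
      by rw [chaos_eq_apply_update]⟩
    rw [update_of_ne hk]
    exact pi_norm_le_iff_of_nonneg zero_le_one |>.2 fun v => (abs_boolSign _).le

/-- Bohnenblust–Hille-type mixed inequality on `ℓ_∞^n`: for fixed `i` and fixed `j₀`,
`(∑_{ĵᵢ} |T|²)^{1/2}` is bounded by `(√2)^{m-1}` times the Rademacher average
(expectation over uniform signs in the other coordinates), which in turn is bounded by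
`(√2)^{m-1}` times the norm of the restricted `(m-1)`-linear form `T(e_{j₀},·,…,·)`. -/
theorem multiple_khinchin_slice_estimate (m : ℕ) (hm : 2 ≤ m) (n : ℕ)
    (T : ContinuousMultilinearMap ℝ (fun _ : Fin m => (Fin n → ℝ)) ℝ)
    (i : Fin m) (j₀ : Fin n) :
    (∑ j ∈ Finset.univ.filter (fun j : Fin m → Fin n => j i = j₀),
        |T (fun k => Pi.single (j k) 1)| ^ (2 : ℝ)) ^ ((1 : ℝ) / 2)
      ≤ Real.sqrt 2 ^ (m - 1) *
        ((∑ ε : Fin m → Fin n → Bool,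
            |∑ j ∈ Finset.univ.filter (fun j : Fin m → Fin n => j i = j₀),
                (∏ k ∈ Finset.univ.erase i, (if ε k (j k) then (1 : ℝ) else -1)) *
                  T (fun k => Pi.single (j k) 1)|) /
          (Fintype.card (Fin m → Fin n → Bool))) ∧
    Real.sqrt 2 ^ (m - 1) *
        ((∑ ε : Fin m → Fin n → Bool,
            |∑ j ∈ Finset.univ.filter (fun j : Fin m → Fin n => j i = j₀),
                (∏ k ∈ Finset.univ.erase i, (if ε k (j k) then (1 : ℝ) else -1)) *
                  T (fun k => Pi.single (j k) 1)|) /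
          (Fintype.card (Fin m → Fin n → Bool)))
      ≤ Real.sqrt 2 ^ (m - 1) *
        sSup {c : ℝ | ∃ x : Fin m → (Fin n → ℝ),
          x i = Pi.single j₀ 1 ∧ (∀ k, k ≠ i → ‖x k‖ ≤ 1) ∧ c = |T x|} :=
  multiple_khinchin_slice_estimate_general m n T i j₀
end
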